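/- arXiv:2305.06681 — 3 statements merged into one kernel-verified Lean document; each statement's English description precedes it below -/
import Mathlib

section
/- On the flat torus T³ = ℝ³/(2πℤ)³, the solid toroidal annulus metric construction: for the metric g_n = (dφ₁² + dφ₂²)/n + n² dt² on T² × [0,2π], a divergence-free vector field of the form v = v¹(t)∂_{φ₁} + v²(t)∂_{φ₂} satisfying curl_{g_n} v = λ v with λ > 0, tangent to the boundary, and L²-orthogonal to the harmonic fields span{∂_{φ₁}, ∂_{φ₂}} has smallest possible eigenvalue λ = 1/n, attained by v₁(t) = sin(t)∂_{φ₁} + cos(t)∂_{φ₂}. -/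
open MeasureTheory intervalIntegral

lemma ode_sol (ω : ℝ) (v1 v2 : ℝ → ℝ)
    (h1 : Differentiable ℝ v1) (h2 : Differentiable ℝ v2)
    (hd1 : ∀ t, deriv v1 t = ω * v2 t) (hd2 : ∀ t, deriv v2 t = -ω * v1 t) :
    ∀ t, v1 t = v1 0 * Real.cos (ω * t) + v2 0 * Real.sin (ω * t) ∧
         v2 t = -(v1 0) * Real.sin (ω * t) + v2 0 * Real.cos (ω * t) := by
  set a := v1 0
  set b := v2 0
  set w1 : ℝ → ℝ := fun t => a * Real.cos (ω * t) + b * Real.sin (ω * t) with hw1def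
  set w2 : ℝ → ℝ := fun t => -a * Real.sin (ω * t) + b * Real.cos (ω * t) with hw2def
  set F : ℝ → ℝ := fun t => (v1 t - w1 t) ^ 2 + (v2 t - w2 t) ^ 2 with hFdef
  have hlin : ∀ t : ℝ, HasDerivAt (fun t : ℝ => ω * t) ω t := by
    intro t
    simpa using (hasDerivAt_id t).const_mul ω
  have hw1' : ∀ t, HasDerivAt w1 (ω * w2 t) t := by
    intro t
    have hc : HasDerivAt (fun t => Real.cos (ω * t)) (-Real.sin (ω * t) * ω) t :=
      (hlin t).cos
    have hs : HasDerivAt (fun t => Real.sin (ω * t)) (Real.cos (ω * t) * ω) t :=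
      (hlin t).sin
    have := (hc.const_mul a).add (hs.const_mul b)
    refine this.congr_deriv ?_
    simp only [hw2def]
    ring
  have hw2' : ∀ t, HasDerivAt w2 (-ω * w1 t) t := by
    intro t
    have hc : HasDerivAt (fun t => Real.cos (ω * t)) (-Real.sin (ω * t) * ω) t :=
      (hlin t).cos
    have hs : HasDerivAt (fun t => Real.sin (ω * t)) (Real.cos (ω * t) * ω) t :=
      (hlin t).sin
    have := (hs.const_mul (-a)).add (hc.const_mul b)
    refine this.congr_deriv ?_
    simp only [hw1def]
    ring
  have hv1' : ∀ t, HasDerivAt v1 (ω * v2 t) t := by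
    intro t
    have := (h1 t).hasDerivAt
    rwa [hd1 t] at this
  have hv2' : ∀ t, HasDerivAt v2 (-ω * v1 t) t := by
    intro t
    have := (h2 t).hasDerivAt
    rwa [hd2 t] at this
  have hF' : ∀ t, HasDerivAt F 0 t := by
    intro t
    have h1' := ((hv1' t).sub (hw1' t)).pow 2
    have h2' := ((hv2' t).sub (hw2' t)).pow 2
    have := h1'.add h2'
    refine this.congr_deriv ?_
    push_cast
    simp only [Pi.sub_apply]
    ring
  have hFconst : ∀ t, F t = F 0 := by
    intro t
    exact is_const_of_deriv_eq_zero (fun x => (hF' x).differentiableAt)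
      (fun x => (hF' x).deriv) t 0
  have hF0 : F 0 = 0 := by
    simp [hFdef, hw1def, hw2def, a, b]
  intro t
  have ht : F t = 0 := (hFconst t).trans hF0
  have ht' : (v1 t - w1 t) ^ 2 + (v2 t - w2 t) ^ 2 = 0 := ht
  have h1z : (v1 t - w1 t) ^ 2 = 0 ∧ (v2 t - w2 t) ^ 2 = 0 := by
    constructor <;> nlinarith [sq_nonneg (v1 t - w1 t), sq_nonneg (v2 t - w2 t)]
  constructor
  · have := pow_eq_zero_iff (n := 2) (by norm_num) |>.mp h1z.1
    simpa [hw1def, sub_eq_zero] using this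
  · have := pow_eq_zero_iff (n := 2) (by norm_num) |>.mp h1z.2
    simpa [hw2def, sub_eq_zero] using this

/-- On the solid toroidal annulus `T² × [0,2π]` with the metric
`g_n = (dφ₁² + dφ₂²)/n + n² dt²`, a divergence-free vector field of the form
`v = v¹(t)∂_{φ₁} + v²(t)∂_{φ₂}` satisfying `curl_{g_n} v = λ v` with `λ > 0`, tangent to
the boundary, and `L²`-orthogonal to the harmonic fields `span{∂_{φ₁}, ∂_{φ₂}}`
(the eigenvalue equation reducing to the ODE system `∂_t v¹ = nλ v²`,
`∂_t v² = −nλ v¹`, with orthogonality condition `∫₀^{2π} vⁱ(t) dt = 0`) has smallest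
possible eigenvalue `λ = 1/n`, attained by `v₁(t) = sin(t)∂_{φ₁} + cos(t)∂_{φ₂}`. -/
theorem toroidal_annulus_least_eigenvalue (n : ℕ) (hn : 0 < n) :
    IsLeast {lam : ℝ | 0 < lam ∧ ∃ v1 v2 : ℝ → ℝ,
        Differentiable ℝ v1 ∧ Differentiable ℝ v2 ∧
        (¬ ∀ t : ℝ, v1 t = 0 ∧ v2 t = 0) ∧
        (∀ t : ℝ, deriv v1 t = (n : ℝ) * lam * v2 t) ∧
        (∀ t : ℝ, deriv v2 t = -((n : ℝ) * lam) * v1 t) ∧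
        (∫ t in (0 : ℝ)..(2 * Real.pi), v1 t) = 0 ∧
        (∫ t in (0 : ℝ)..(2 * Real.pi), v2 t) = 0} (1 / (n : ℝ)) ∧
    -- the minimal eigenvalue `1/n` is attained by `v¹ = sin`, `v² = cos`
    (∀ t : ℝ, deriv Real.sin t = (n : ℝ) * (1 / (n : ℝ)) * Real.cos t) ∧
    (∀ t : ℝ, deriv Real.cos t = -((n : ℝ) * (1 / (n : ℝ))) * Real.sin t) ∧
    (∫ t in (0 : ℝ)..(2 * Real.pi), Real.sin t) = 0 ∧
    (∫ t in (0 : ℝ)..(2 * Real.pi), Real.cos t) = 0 := by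
  have hn0 : (n : ℝ) ≠ 0 := Nat.cast_ne_zero.mpr hn.ne'
  have hnpos : (0 : ℝ) < n := Nat.cast_pos.mpr hn
  have hone : (n : ℝ) * (1 / (n : ℝ)) = 1 := by field_simp
  have hsin : (∫ t in (0 : ℝ)..(2 * Real.pi), Real.sin t) = 0 := by
    rw [integral_sin]
    simp [Real.cos_two_pi]
  have hcos : (∫ t in (0 : ℝ)..(2 * Real.pi), Real.cos t) = 0 := by
    rw [integral_cos]
    simp [Real.sin_two_pi]
  have hds : ∀ t : ℝ, deriv Real.sin t = (n : ℝ) * (1 / (n : ℝ)) * Real.cos t := by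
    intro t
    rw [Real.deriv_sin, hone, one_mul]
  have hdc : ∀ t : ℝ, deriv Real.cos t = -((n : ℝ) * (1 / (n : ℝ))) * Real.sin t := by
    intro t
    rw [Real.deriv_cos, hone, neg_one_mul]
  refine ⟨⟨⟨by positivity, Real.sin, Real.cos, Real.differentiable_sin,
      Real.differentiable_cos, ?_, hds, hdc, hsin, hcos⟩, ?_⟩, hds, hdc, hsin, hcos⟩
  · intro h
    have := (h 0).2
    simp at this
  · -- lower bound
    rintro lam ⟨hl, v1, v2, h1, h2, hnz, hd1, hd2, hI1, hI2⟩
    set ω : ℝ := (n : ℝ) * lam with hωdef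
    have hωpos : 0 < ω := by positivity
    have hd2' : ∀ t, deriv v2 t = -ω * v1 t := by
      intro t; rw [hd2 t]
    have sol := ode_sol ω v1 v2 h1 h2 hd1 hd2'
    have hv1' : ∀ t, HasDerivAt v1 (ω * v2 t) t := by
      intro t
      have := (h1 t).hasDerivAt
      rwa [hd1 t] at this
    have hv2' : ∀ t, HasDerivAt v2 (-ω * v1 t) t := by
      intro t
      have := (h2 t).hasDerivAt
      rwa [hd2' t] at this
    -- periodicity from orthogonality via FTC
    have hInt1 : IntervalIntegrable (fun t => ω * v2 t) volume 0 (2 * Real.pi) :=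
      (continuous_const.mul h2.continuous).intervalIntegrable _ _
    have hInt2 : IntervalIntegrable (fun t => -ω * v1 t) volume 0 (2 * Real.pi) :=
      (continuous_const.mul h1.continuous).intervalIntegrable _ _
    have hper1 : v1 (2 * Real.pi) = v1 0 := by
      have := integral_eq_sub_of_hasDerivAt (f := v1)
        (fun x _ => hv1' x) hInt1
      rw [intervalIntegral.integral_const_mul, hI2, mul_zero] at this
      linarith [this.symm]
    have hper2 : v2 (2 * Real.pi) = v2 0 := by
      have := integral_eq_sub_of_hasDerivAt (f := v2)
        (fun x _ => hv2' x) hInt2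
      rw [intervalIntegral.integral_const_mul, hI1, mul_zero] at this
      linarith [this.symm]
    set a := v1 0
    set b := v2 0
    set c := Real.cos (ω * (2 * Real.pi)) with hcdef
    set s := Real.sin (ω * (2 * Real.pi)) with hsdef
    have e1 : a = a * c + b * s := by
      have := (sol (2 * Real.pi)).1
      rw [hper1] at this
      exact this
    have e2 : b = -a * s + b * c := by
      have := (sol (2 * Real.pi)).2
      rw [hper2] at this
      exact this
    have hab : a ^ 2 + b ^ 2 ≠ 0 := by
      intro h
      apply hnz
      intro t
      have ha : a = 0 := by nlinarith [sq_nonneg a, sq_nonneg b]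
      have hb : b = 0 := by nlinarith [sq_nonneg a, sq_nonneg b]
      have := sol t
      rw [ha, hb] at this
      constructor
      · rw [this.1]; ring
      · rw [this.2]; ring
    have hc1 : c = 1 := by
      have key : (a ^ 2 + b ^ 2) * (c - 1) = 0 := by linear_combination (-a) * e1 + (-b) * e2
      rcases mul_eq_zero.mp key with h | h
      · exact absurd h hab
      · linarith
    obtain ⟨k, hk⟩ := Real.cos_eq_one_iff _ |>.mp hc1
    have hπ : (0 : ℝ) < 2 * Real.pi := by positivity
    have hωk : ω = (k : ℝ) :=
      (mul_right_cancel₀ (ne_of_gt hπ) hk).symm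
    have hk1 : (1 : ℝ) ≤ (k : ℝ) := by
      have hkpos : (0 : ℤ) < k := by
        by_contra h
        push_neg at h
        have : (k : ℝ) ≤ 0 := by exact_mod_cast h
        linarith [hωk ▸ hωpos]
      exact_mod_cast hkpos
    have hω1 : (1 : ℝ) ≤ ω := hωk ▸ hk1
    rw [div_le_iff₀ hnpos]
    nlinarith [hω1]
end

section
/- On a closed Riemannian 3-manifold (M,g), the helicity functional H(X) = ∫_M g(curl⁻¹X, X) dV_g on the space of continuous exact vector fields (with C⁰-norm) is twice continuously Fréchet differentiable, with DH(X)(Y) = 2 (curl⁻¹X, Y)_{L²} and D²H(X)(Z,Y) = 2 (curl⁻¹Y, Z)_{L²}; in particular D^kH ≡ 0 for k ≥ 3. -/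
/-- On a closed Riemannian 3-manifold `(M,g)`, the helicity functional
`H(X) = ∫_M g(curl⁻¹X, X) dV_g = (curl⁻¹X, X)_{L²}` on the space of continuous exact
vector fields (a normed space with the `C⁰`-norm, on which the `L²` inner product `ip`
is a continuous bilinear form and `curl⁻¹` a continuous self-adjoint operator) is twice
continuously Fréchet differentiable, with `DH(X)(Y) = 2(curl⁻¹X, Y)_{L²}` and
`D²H(X)(Z,Y) = 2(curl⁻¹Y, Z)_{L²}`; in particular `D^kH ≡ 0` for `k ≥ 3`. -/
theorem helicity_twice_frechet_differentiable
    (X : Type*) [NormedAddCommGroup X] [NormedSpace ℝ X]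
    -- the L² inner product, as a continuous bilinear form on the C⁰ exact fields
    (ip : X →L[ℝ] X →L[ℝ] ℝ)
    (ip_symm : ∀ u v : X, ip u v = ip v u)
    -- the inverse of curl, a bounded self-adjoint operator
    (curlInv : X →L[ℝ] X)
    (curlInv_selfAdjoint : ∀ u v : X, ip (curlInv u) v = ip u (curlInv v)) :
    ContDiff ℝ 2 (fun u : X => ip (curlInv u) u) ∧
    (∀ x y : X, fderiv ℝ (fun u : X => ip (curlInv u) u) x y = 2 * ip (curlInv x) y) ∧
    (∀ x z y : X,
      fderiv ℝ (fun w : X => fderiv ℝ (fun u : X => ip (curlInv u) u) w y) x z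
        = 2 * ip (curlInv y) z) ∧
    (∀ k : ℕ, 3 ≤ k → ∀ x : X, iteratedFDeriv ℝ k (fun u : X => ip (curlInv u) u) x = 0) := by
  -- The bilinear form `B u v = ip (curlInv u) v`.
  set B : X →L[ℝ] X →L[ℝ] ℝ := ip.comp curlInv with hBdef
  have hB : IsBoundedBilinearMap ℝ (fun p : X × X => B p.1 p.2) := B.isBoundedBilinearMap
  have hfun : (fun u : X => ip (curlInv u) u) = fun u : X => B u u := rfl
  -- symmetry of `B`
  have hBsymm : ∀ u v : X, B u v = B v u := by
    intro u v
    simp only [hBdef, ContinuousLinearMap.comp_apply]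
    rw [curlInv_selfAdjoint, ip_symm]
  -- derivative of the quadratic form
  have hf : ∀ x : X, HasFDerivAt (fun u : X => B u u) (B x + B.flip x) x := by
    intro x
    have h1 : HasFDerivAt (fun u : X => (u, u))
        ((ContinuousLinearMap.id ℝ X).prod (ContinuousLinearMap.id ℝ X)) x :=
      (hasFDerivAt_id x).prodMk (hasFDerivAt_id x)
    have h2 := HasFDerivAt.comp (f := fun u : X => (u, u)) x (hB.hasFDerivAt (x, x)) h1
    have h3 : (hB.deriv (x, x)).comp
        ((ContinuousLinearMap.id ℝ X).prod (ContinuousLinearMap.id ℝ X))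
        = B x + B.flip x := by
      ext y
      simp [hB.deriv_apply]
    exact h3 ▸ h2
  have hfderiv : ∀ x : X, fderiv ℝ (fun u : X => B u u) x = B x + B.flip x :=
    fun x => (hf x).fderiv
  rw [hfun]
  refine ⟨?_, ?_, ?_, ?_⟩
  · exact (hB.contDiff.comp (contDiff_id.prodMk contDiff_id)).of_le le_top
  · intro x y
    rw [hfderiv x]
    simp only [ContinuousLinearMap.add_apply, ContinuousLinearMap.flip_apply]
    rw [hBsymm y x]
    have : B x y = ip (curlInv x) y := rfl
    rw [this]; ring
  · intro x z y
    have hfd : (fun w : X => fderiv ℝ (fun u : X => B u u) w y) = ⇑(B.flip y + B y) := by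
      funext w
      rw [hfderiv w]
      simp
    rw [hfd, ContinuousLinearMap.fderiv]
    simp only [ContinuousLinearMap.add_apply, ContinuousLinearMap.flip_apply]
    rw [hBsymm z y]
    have : B y z = ip (curlInv y) z := rfl
    rw [this]; ring
  · intro k hk x
    obtain ⟨n, rfl⟩ : ∃ n, k = n + 1 + 1 + 1 := ⟨k - 3, by omega⟩
    have hD : (fun w : X => fderiv ℝ (fun u : X => B u u) w) = ⇑(B + B.flip) := by
      funext w
      rw [hfderiv w]
      simp
    have hc : (fun y : X => fderiv ℝ (⇑(B + B.flip)) y) = fun _ : X => (B + B.flip) := by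
      funext y; exact (B + B.flip).fderiv
    rw [iteratedFDeriv_succ_eq_comp_right]
    simp only [Function.comp_apply]
    rw [hD, iteratedFDeriv_succ_eq_comp_right]
    simp only [Function.comp_apply]
    rw [hc, iteratedFDeriv_const_of_ne (by omega : n + 1 ≠ 0), Pi.zero_apply,
      LinearIsometryEquiv.map_zero]
    exact LinearIsometryEquiv.map_zero _
end

section
/- On a closed Riemannian 3-manifold (M,g), the energy functional E(X) = ∫_M |X|_g^{3/2} dV_g is continuously Fréchet differentiable on C⁰ exact vector fields with DE(X)(Y) = (3/2)∫_M F(X)·Y dV_g where F(X) = X/√|X|_g where X ≠ 0 and 0 otherwise; moreover, near a nowhere-vanishing X₀ it is twice continuously Fréchet differentiable with D²E(X)(Z,Y) = (3/2)∫_M (Z·Y)/√|X|_g dV_g − (3/4)∫_M (X·Z)(X·Y)/|X|_g^{5/2} dV_g. -/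
open MeasureTheory
open scoped RealInnerProductSpace Classical

/-- The pointwise map `F_p(v) = v/√|v|` for `v ≠ 0`, and `F_p(0) = 0`. -/
noncomputable def Fhalf {E : Type*} [NormedAddCommGroup E] [InnerProductSpace ℝ E]
    (v : E) : E :=
  if v = 0 then 0 else ‖v‖ ^ (-(1 : ℝ) / 2) • v

namespace EnergyAux

variable {E : Type*} [NormedAddCommGroup E] [InnerProductSpace ℝ E]

lemma norm_Fhalf (v : E) : ‖Fhalf v‖ = ‖v‖ ^ ((1:ℝ)/2) := by
  unfold Fhalf
  by_cases h : v = 0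
  · simp [h, Real.zero_rpow (by norm_num : (1:ℝ)/2 ≠ 0)]
  · have hv : (0:ℝ) < ‖v‖ := norm_pos_iff.mpr h
    rw [if_neg h, norm_smul, Real.norm_eq_abs,
      abs_of_nonneg (Real.rpow_nonneg (norm_nonneg v) _)]
    calc ‖v‖ ^ (-(1:ℝ)/2) * ‖v‖ = ‖v‖ ^ (-(1:ℝ)/2) * ‖v‖ ^ (1:ℝ) := by rw [Real.rpow_one]
      _ = ‖v‖ ^ (-(1:ℝ)/2 + 1) := (Real.rpow_add hv _ _).symm
      _ = ‖v‖ ^ ((1:ℝ)/2) := by norm_num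

noncomputable def dF (v : E) : E →L[ℝ] E :=
  ‖v‖ ^ (-(1:ℝ)/2) • ContinuousLinearMap.id ℝ E
    - ((1/2) * ‖v‖ ^ (-(5:ℝ)/2)) • (innerSL ℝ v).smulRight v

lemma dF_apply (v z : E) :
    dF v z = ‖v‖ ^ (-(1:ℝ)/2) • z - ((1/2) * ‖v‖ ^ (-(5:ℝ)/2) * ⟪v, z⟫) • v := by
  simp [dF, smul_smul, mul_assoc]

lemma dF_opnorm {v : E} (hv : v ≠ 0) : ‖dF v‖ ≤ (3/2) * ‖v‖ ^ (-(1:ℝ)/2) := by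
  have hvpos : (0:ℝ) < ‖v‖ := norm_pos_iff.mpr hv
  have hr1 : (0:ℝ) ≤ ‖v‖ ^ (-(1:ℝ)/2) := Real.rpow_nonneg (norm_nonneg v) _
  have hr5 : (0:ℝ) ≤ ‖v‖ ^ (-(5:ℝ)/2) := Real.rpow_nonneg (norm_nonneg v) _
  apply ContinuousLinearMap.opNorm_le_bound _ (by positivity)
  intro z
  rw [dF_apply]
  have key : ‖v‖ ^ (-(5:ℝ)/2) * (‖v‖ * ‖v‖) = ‖v‖ ^ (-(1:ℝ)/2) := by
    calc ‖v‖ ^ (-(5:ℝ)/2) * (‖v‖ * ‖v‖)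
        = ‖v‖ ^ (-(5:ℝ)/2) * (‖v‖ ^ (1:ℝ) * ‖v‖ ^ (1:ℝ)) := by rw [Real.rpow_one]
      _ = ‖v‖ ^ (-(5:ℝ)/2 + 1 + 1) := by
          rw [Real.rpow_add hvpos, Real.rpow_add hvpos]; ring
      _ = ‖v‖ ^ (-(1:ℝ)/2) := by norm_num
  have h1 : ‖(‖v‖ ^ (-(1:ℝ)/2) : ℝ) • z‖ ≤ ‖v‖ ^ (-(1:ℝ)/2) * ‖z‖ := by
    rw [norm_smul, Real.norm_eq_abs, abs_of_nonneg hr1]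
  have h2 : ‖((1/2) * ‖v‖ ^ (-(5:ℝ)/2) * ⟪v, z⟫) • v‖ ≤ (1/2) * ‖v‖ ^ (-(1:ℝ)/2) * ‖z‖ := by
    rw [norm_smul, Real.norm_eq_abs, abs_mul, abs_mul,
      abs_of_nonneg (by norm_num : (0:ℝ) ≤ 1/2), abs_of_nonneg hr5]
    have hi : |⟪v, z⟫| ≤ ‖v‖ * ‖z‖ := abs_real_inner_le_norm v z
    calc 1/2 * ‖v‖ ^ (-(5:ℝ)/2) * |⟪v, z⟫| * ‖v‖
        ≤ 1/2 * ‖v‖ ^ (-(5:ℝ)/2) * (‖v‖ * ‖z‖) * ‖v‖ := by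
          gcongr
      _ = 1/2 * (‖v‖ ^ (-(5:ℝ)/2) * (‖v‖ * ‖v‖)) * ‖z‖ := by ring
      _ = 1/2 * ‖v‖ ^ (-(1:ℝ)/2) * ‖z‖ := by rw [key]
  calc ‖‖v‖ ^ (-(1:ℝ)/2) • z - ((1/2) * ‖v‖ ^ (-(5:ℝ)/2) * ⟪v, z⟫) • v‖
      ≤ ‖(‖v‖ ^ (-(1:ℝ)/2) : ℝ) • z‖ + ‖((1/2) * ‖v‖ ^ (-(5:ℝ)/2) * ⟪v, z⟫) • v‖ :=
        norm_sub_le _ _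
    _ ≤ ‖v‖ ^ (-(1:ℝ)/2) * ‖z‖ + (1/2) * ‖v‖ ^ (-(1:ℝ)/2) * ‖z‖ := add_le_add h1 h2
    _ = 3/2 * ‖v‖ ^ (-(1:ℝ)/2) * ‖z‖ := by ring

lemma sq_rpow (v : E) (a : ℝ) : (⟪v, v⟫ : ℝ) ^ a = ‖v‖ ^ (2 * a) := by
  rw [real_inner_self_eq_norm_sq, ← Real.rpow_natCast ‖v‖ 2,
    ← Real.rpow_mul (norm_nonneg v)]
  norm_num

lemma Fhalf_eq {v : E} (hv : v ≠ 0) :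
    Fhalf v = ((⟪v, v⟫ : ℝ) ^ (-(1:ℝ)/4)) • v := by
  rw [Fhalf, if_neg hv, sq_rpow]
  norm_num

lemma hasFDerivAt_Fhalf {v : E} (hv : v ≠ 0) : HasFDerivAt Fhalf (dF v) v := by
  have hvpos : (0:ℝ) < ‖v‖ := norm_pos_iff.mpr hv
  have hip : (0:ℝ) < ⟪v, v⟫ := by rw [real_inner_self_eq_norm_sq]; positivity
  have hq : HasFDerivAt (fun w : E => (⟪w, w⟫ : ℝ))
      ((fderivInnerCLM ℝ ((v, v) : E × E)).comp
        ((ContinuousLinearMap.id ℝ E).prod (ContinuousLinearMap.id ℝ E))) v :=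
    HasFDerivAt.inner ℝ (hasFDerivAt_id v) (hasFDerivAt_id v)
  have hsc : HasDerivAt (fun t : ℝ => t ^ (-(1:ℝ)/4))
      ((-(1:ℝ)/4) * (⟪v, v⟫ : ℝ) ^ (-(1:ℝ)/4 - 1)) (⟪v, v⟫ : ℝ) :=
    Real.hasDerivAt_rpow_const (Or.inl hip.ne')
  have hcomp := (hsc.comp_hasFDerivAt (f := fun w : E => (⟪w, w⟫ : ℝ)) v hq).smul (hasFDerivAt_id v)
  have : HasFDerivAt (fun w : E => ((⟪w, w⟫ : ℝ) ^ (-(1:ℝ)/4)) • w) (dF v) v := by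
    refine hcomp.congr_fderiv ?_; symm
    ext z
    simp only [ContinuousLinearMap.add_apply, ContinuousLinearMap.smul_apply,
      ContinuousLinearMap.smulRight_apply, ContinuousLinearMap.comp_apply,
      ContinuousLinearMap.coe_id', id_eq, ContinuousLinearMap.prod_apply,
      fderivInnerCLM_apply, Function.comp_apply]
    rw [dF_apply]
    have e1' : (⟪v, v⟫ : ℝ) ^ (-(1:ℝ)/4) = ‖v‖ ^ (-(1:ℝ)/2) := by rw [sq_rpow]; norm_num
    have e2' : (⟪v, v⟫ : ℝ) ^ (-(1:ℝ)/4 - 1) = ‖v‖ ^ (-(5:ℝ)/2) := by rw [sq_rpow]; norm_num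
    rw [e1', e2', real_inner_comm z v]
    rw [sub_eq_add_neg]
    congr 1
    rw [← neg_smul, smul_eq_mul]
    congr 1
    ring
  apply this.congr_of_eventuallyEq
  have hopen : {w : E | w ≠ 0} ∈ nhds v := by
    exact IsOpen.mem_nhds isOpen_ne hv
  filter_upwards [hopen] with w hw
  exact Fhalf_eq hw

lemma sqrt4 : Real.sqrt 4 = 2 := by
  rw [show (4:ℝ) = 2^2 by norm_num, Real.sqrt_sq (by norm_num : (0:ℝ) ≤ 2)]

lemma norm_Fhalf_sub_le (u v : E) : ‖Fhalf u - Fhalf v‖ ≤ 4 * ‖u - v‖ ^ ((1:ℝ)/2) := by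
  set d := ‖u - v‖ with hd
  have hd0 : (0:ℝ) ≤ d := norm_nonneg _
  rcases eq_or_lt_of_le hd0 with h0 | hdpos
  · have : u = v := by rwa [eq_comm, norm_eq_zero, sub_eq_zero] at h0
    simp [this]
    positivity
  by_cases hu : ‖u‖ ≤ 2 * d
  · -- both vectors are small
    have hv : ‖v‖ ≤ 3 * d := by
      calc ‖v‖ ≤ ‖u‖ + ‖v - u‖ := by
            simpa using norm_add_le u (v - u)
        _ ≤ 2 * d + d := by
            rw [norm_sub_rev]; exact add_le_add hu le_rfl
        _ = 3 * d := by ring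
    have key : ∀ w : E, ‖w‖ ≤ 3 * d → ‖Fhalf w‖ ≤ 2 * d ^ ((1:ℝ)/2) := by
      intro w hw
      rw [norm_Fhalf, ← Real.sqrt_eq_rpow, ← Real.sqrt_eq_rpow]
      calc Real.sqrt ‖w‖ ≤ Real.sqrt (4 * d) := by
            apply Real.sqrt_le_sqrt; linarith
        _ = 2 * Real.sqrt d := by
            rw [Real.sqrt_mul (by norm_num : (0:ℝ) ≤ 4), sqrt4]
    calc ‖Fhalf u - Fhalf v‖ ≤ ‖Fhalf u‖ + ‖Fhalf v‖ := norm_sub_le _ _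
      _ ≤ 2 * d ^ ((1:ℝ)/2) + 2 * d ^ ((1:ℝ)/2) :=
          add_le_add (key u (by linarith)) (key v hv)
      _ = 4 * d ^ ((1:ℝ)/2) := by ring
  · push_neg at hu
    -- u is far from 0; use the mean value inequality on the ball around u
    have hball : ∀ w ∈ Metric.closedBall u d, d ≤ ‖w‖ := by
      intro w hw
      rw [Metric.mem_closedBall, dist_eq_norm] at hw
      calc d = 2 * d - d := by ring
        _ ≤ ‖u‖ - ‖w - u‖ := by
            have := hu.le
            linarith [hw]
        _ ≤ ‖w‖ := by
            have := norm_sub_norm_le w u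
            have h2 := norm_sub_rev w u
            linarith [abs_norm_sub_norm_le w u, le_abs_self (‖w‖ - ‖u‖), neg_abs_le (‖w‖ - ‖u‖)]
    have hmvt := Convex.norm_image_sub_le_of_norm_hasFDerivWithin_le
      (f := Fhalf) (f' := dF) (s := Metric.closedBall u d)
      (fun w hw => by
        have hw0 : w ≠ 0 := by
          intro h; have := hball w hw; rw [h] at this; simp at this; linarith
        exact (hasFDerivAt_Fhalf hw0).hasFDerivWithinAt)
      (fun w hw => by
        have hwd : d ≤ ‖w‖ := hball w hw
        have hw0 : w ≠ 0 := by
          intro h; rw [h] at hwd; simp at hwd; linarith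
        calc ‖dF w‖ ≤ (3/2) * ‖w‖ ^ (-(1:ℝ)/2) := dF_opnorm hw0
          _ ≤ (3/2) * d ^ (-(1:ℝ)/2) := by
              have := Real.rpow_le_rpow_of_nonpos hdpos hwd (by norm_num : -(1:ℝ)/2 ≤ 0)
              linarith)
      (convex_closedBall u d)
      (Metric.mem_closedBall_self hd0)
      (by rw [Metric.mem_closedBall, dist_eq_norm, norm_sub_rev])
    rw [norm_sub_rev] at hmvt
    calc ‖Fhalf u - Fhalf v‖ ≤ (3/2) * d ^ (-(1:ℝ)/2) * ‖v - u‖ := hmvt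
      _ = (3/2) * (d ^ (-(1:ℝ)/2) * d ^ (1:ℝ)) := by
          rw [Real.rpow_one, norm_sub_rev]; ring
      _ = (3/2) * d ^ ((1:ℝ)/2) := by
          rw [← Real.rpow_add hdpos]; norm_num
      _ ≤ 4 * d ^ ((1:ℝ)/2) := by
          have : (0:ℝ) ≤ d ^ ((1:ℝ)/2) := Real.rpow_nonneg hd0 _
          linarith

lemma continuous_Fhalf : Continuous (Fhalf : E → E) := by
  rw [Metric.continuous_iff]
  intro b ε hε
  refine ⟨(ε/4)^2, by positivity, fun a hab => ?_⟩
  rw [dist_eq_norm] at hab ⊢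
  calc ‖Fhalf a - Fhalf b‖ ≤ 4 * ‖a - b‖ ^ ((1:ℝ)/2) := norm_Fhalf_sub_le a b
    _ < 4 * ((ε/4)^2) ^ ((1:ℝ)/2) := by
        have := Real.rpow_lt_rpow (norm_nonneg _) hab (by norm_num : (0:ℝ) < 1/2)
        linarith
    _ = ε := by
        rw [← Real.sqrt_eq_rpow, Real.sqrt_sq (by positivity : (0:ℝ) ≤ ε/4)]
        ring

noncomputable def phi (v : E) : ℝ := ‖v‖ ^ ((3:ℝ)/2)

noncomputable def phi' (v : E) : E →L[ℝ] ℝ := (3/2 : ℝ) • innerSL ℝ (Fhalf v)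

lemma phi'_apply (v z : E) : phi' v z = (3/2) * ⟪Fhalf v, z⟫ := rfl

lemma hasFDerivAt_phi (v : E) : HasFDerivAt phi (phi' v) v := by
  by_cases hv : v = 0
  · subst hv
    have h0 : phi' (0 : E) = 0 := by
      ext z; simp [phi'_apply, Fhalf]
    rw [h0, hasFDerivAt_iff_isLittleO_nhds_zero]
    rw [Asymptotics.isLittleO_iff]
    intro c hc
    rw [Metric.eventually_nhds_iff]
    refine ⟨c^2, by positivity, fun z hz => ?_⟩
    rw [dist_zero_right] at hz
    simp only [phi, ContinuousLinearMap.zero_apply, zero_add, norm_zero,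
      Real.zero_rpow (by norm_num : (3:ℝ)/2 ≠ 0), sub_zero]
    rcases eq_or_ne z 0 with rfl | hz0
    · simp [Real.zero_rpow (by norm_num : (3:ℝ)/2 ≠ 0)]
    · have hzpos : (0:ℝ) < ‖z‖ := norm_pos_iff.mpr hz0
      have e : ‖z‖ ^ ((3:ℝ)/2) = ‖z‖ ^ ((1:ℝ)/2) * ‖z‖ := by
        rw [show (3:ℝ)/2 = 1/2 + 1 by norm_num, Real.rpow_add hzpos, Real.rpow_one]
      rw [Real.norm_eq_abs, abs_of_nonneg (Real.rpow_nonneg (norm_nonneg z) _), e]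
      have h1 : ‖z‖ ^ ((1:ℝ)/2) ≤ (c^2) ^ ((1:ℝ)/2) :=
        Real.rpow_le_rpow (norm_nonneg z) hz.le (by norm_num)
      have h2 : ((c:ℝ)^2) ^ ((1:ℝ)/2) = c := by
        rw [← Real.sqrt_eq_rpow, Real.sqrt_sq hc.le]
      nlinarith [Real.rpow_nonneg (norm_nonneg z) ((1:ℝ)/2)]
  · have hvpos : (0:ℝ) < ‖v‖ := norm_pos_iff.mpr hv
    have hip : (0:ℝ) < (⟪v, v⟫ : ℝ) := by rw [real_inner_self_eq_norm_sq]; positivity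
    have hphi : phi = fun w : E => (⟪w, w⟫ : ℝ) ^ ((3:ℝ)/4) := by
      funext w
      rw [phi, sq_rpow]
      norm_num
    have hq : HasFDerivAt (fun w : E => (⟪w, w⟫ : ℝ))
        ((fderivInnerCLM ℝ ((v, v) : E × E)).comp
          ((ContinuousLinearMap.id ℝ E).prod (ContinuousLinearMap.id ℝ E))) v :=
      HasFDerivAt.inner ℝ (hasFDerivAt_id v) (hasFDerivAt_id v)
    have hsc : HasDerivAt (fun t : ℝ => t ^ ((3:ℝ)/4))
        (((3:ℝ)/4) * (⟪v, v⟫ : ℝ) ^ ((3:ℝ)/4 - 1)) (⟪v, v⟫ : ℝ) :=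
      Real.hasDerivAt_rpow_const (Or.inl hip.ne')
    have hcomp := hsc.comp_hasFDerivAt (f := fun w : E => (⟪w, w⟫ : ℝ)) v hq
    rw [hphi]
    refine hcomp.congr_fderiv ?_; symm
    ext z
    simp only [ContinuousLinearMap.coe_comp', Function.comp_apply,
      ContinuousLinearMap.smul_apply, ContinuousLinearMap.comp_apply,
      ContinuousLinearMap.prod_apply, ContinuousLinearMap.coe_id', id_eq,
      fderivInnerCLM_apply, smul_eq_mul]
    rw [phi'_apply, Fhalf, if_neg hv, real_inner_smul_left, real_inner_comm z v]
    have e2' : (⟪v, v⟫ : ℝ) ^ ((3:ℝ)/4 - 1) = ‖v‖ ^ (-(1:ℝ)/2) := by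
      rw [sq_rpow]; norm_num
    rw [e2']
    ring

lemma abs_phi_taylor (a h : E) : |phi (a + h) - phi a - phi' a h| ≤ 6 * ‖h‖ ^ ((3:ℝ)/2) := by
  rcases eq_or_ne h 0 with rfl | hne
  · simp [Real.zero_rpow (by norm_num : (3:ℝ)/2 ≠ 0)]
  have hpos : (0:ℝ) < ‖h‖ := norm_pos_iff.mpr hne
  have hmvt := Convex.norm_image_sub_le_of_norm_hasFDerivWithin_le
    (f := fun w => phi w - phi' a w) (f' := fun w => phi' w - phi' a)
    (s := Metric.closedBall a ‖h‖)
    (fun w _ => ((hasFDerivAt_phi w).sub ((phi' a).hasFDerivAt)).hasFDerivWithinAt)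
    (fun w hw => by
      show ‖phi' w - phi' a‖ ≤ 6 * ‖h‖ ^ ((1:ℝ)/2)
      have h2 : ‖Fhalf w - Fhalf a‖ ≤ 4 * ‖w - a‖ ^ ((1:ℝ)/2) := norm_Fhalf_sub_le w a
      have h3 : ‖w - a‖ ≤ ‖h‖ := by
        rw [Metric.mem_closedBall, dist_eq_norm] at hw; exact hw
      have h4 : ‖w - a‖ ^ ((1:ℝ)/2) ≤ ‖h‖ ^ ((1:ℝ)/2) :=
        Real.rpow_le_rpow (norm_nonneg _) h3 (by norm_num)
      apply ContinuousLinearMap.opNorm_le_bound _ (by positivity)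
      intro z
      rw [ContinuousLinearMap.sub_apply, phi'_apply, phi'_apply]
      calc ‖(3/2) * ⟪Fhalf w, z⟫ - (3/2) * ⟪Fhalf a, z⟫‖
          = (3/2) * |(⟪Fhalf w - Fhalf a, z⟫ : ℝ)| := by
            rw [inner_sub_left, Real.norm_eq_abs, ← mul_sub, abs_mul]
            norm_num
        _ ≤ (3/2) * (‖Fhalf w - Fhalf a‖ * ‖z‖) := by
            have := abs_real_inner_le_norm (Fhalf w - Fhalf a) z
            linarith
        _ ≤ 6 * ‖h‖ ^ ((1:ℝ)/2) * ‖z‖ := by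
            nlinarith [norm_nonneg z, norm_nonneg (Fhalf w - Fhalf a)])
    (convex_closedBall a ‖h‖)
    (Metric.mem_closedBall_self (norm_nonneg h))
    (by rw [Metric.mem_closedBall, dist_eq_norm, add_sub_cancel_left])
  have key : (phi (a + h) - phi' a (a + h)) - (phi a - phi' a a)
      = phi (a + h) - phi a - phi' a h := by
    have : phi' a (a + h) = phi' a a + phi' a h := by rw [map_add]
    linarith [this]
  rw [key, add_sub_cancel_left] at hmvt
  rw [← Real.norm_eq_abs]
  calc ‖phi (a + h) - phi a - phi' a h‖ ≤ 6 * ‖h‖ ^ ((1:ℝ)/2) * ‖h‖ := hmvt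
    _ = 6 * (‖h‖ ^ ((1:ℝ)/2) * ‖h‖ ^ (1:ℝ)) := by rw [Real.rpow_one]; ring
    _ = 6 * ‖h‖ ^ ((3:ℝ)/2) := by rw [← Real.rpow_add hpos]; norm_num

lemma rpow_lip {τ a : ℝ} (hτ : 0 < τ) (ha : a < 0) {s t : ℝ} (hs : τ ≤ s) (ht : τ ≤ t) :
    |s ^ a - t ^ a| ≤ (-a) * τ ^ (a - 1) * |s - t| := by
  have hmvt := Convex.norm_image_sub_le_of_norm_hasDerivWithin_le
    (f := fun x : ℝ => x ^ a) (f' := fun x : ℝ => a * x ^ (a - 1)) (s := Set.Ici τ)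
    (fun x hx => by
      have hx0 : x ≠ 0 := (lt_of_lt_of_le hτ hx).ne'
      exact (Real.hasDerivAt_rpow_const (Or.inl hx0)).hasDerivWithinAt)
    (fun x hx => by
      have hxτ : τ ≤ x := hx
      show |a * x ^ (a - 1)| ≤ (-a) * τ ^ (a - 1)
      rw [abs_mul, abs_of_neg ha, abs_of_nonneg (Real.rpow_nonneg (by linarith) _)]
      have := Real.rpow_le_rpow_of_nonpos hτ hxτ (by linarith : a - 1 ≤ 0)
      nlinarith)
    (convex_Ici τ) ht hs
  calc |s ^ a - t ^ a| = ‖s ^ a - t ^ a‖ := (Real.norm_eq_abs _).symm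
    _ ≤ (-a) * τ ^ (a - 1) * ‖s - t‖ := hmvt
    _ = (-a) * τ ^ (a - 1) * |s - t| := by rw [Real.norm_eq_abs]

noncomputable def Kc (τ R : ℝ) : ℝ :=
  (1/2) * τ ^ (-(3:ℝ)/2) + (5/4) * τ ^ (-(7:ℝ)/2) * R^2 + τ ^ (-(5:ℝ)/2) * R

lemma Kc_nonneg {τ R : ℝ} (hτ : 0 < τ) (hR : 0 ≤ R) : 0 ≤ Kc τ R := by
  unfold Kc; positivity

lemma norm_sub4 {G : Type*} [SeminormedAddCommGroup G] (A B C D : G) :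
    ‖A - B - C - D‖ ≤ ‖A‖ + ‖B‖ + ‖C‖ + ‖D‖ := by
  calc ‖A - B - C - D‖ ≤ ‖A - B - C‖ + ‖D‖ := norm_sub_le _ _
    _ ≤ ‖A - B‖ + ‖C‖ + ‖D‖ := by linarith [norm_sub_le (A - B) C]
    _ ≤ ‖A‖ + ‖B‖ + ‖C‖ + ‖D‖ := by linarith [norm_sub_le A B]

set_option maxHeartbeats 1000000 in
lemma dF_lip {τ R : ℝ} (hτ : 0 < τ) {w w' : E}
    (h1 : τ ≤ ‖w‖) (h2 : ‖w‖ ≤ R) (h3 : τ ≤ ‖w'‖) (h4 : ‖w'‖ ≤ R) :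
    ‖dF w - dF w'‖ ≤ Kc τ R * ‖w - w'‖ := by
  have hR : (0:ℝ) ≤ R := le_trans (le_trans hτ.le h1) h2
  have hKc : (0:ℝ) ≤ Kc τ R := Kc_nonneg hτ hR
  apply ContinuousLinearMap.opNorm_le_bound _ (mul_nonneg hKc (norm_nonneg _))
  intro z
  have hτ3 : (0:ℝ) ≤ τ ^ (-(3:ℝ)/2) := Real.rpow_nonneg hτ.le _
  have hτ5 : (0:ℝ) ≤ τ ^ (-(5:ℝ)/2) := Real.rpow_nonneg hτ.le _
  have hτ7 : (0:ℝ) ≤ τ ^ (-(7:ℝ)/2) := Real.rpow_nonneg hτ.le _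
  have hdd : (0:ℝ) ≤ ‖w - w'‖ := norm_nonneg _
  have hz0 : (0:ℝ) ≤ ‖z‖ := norm_nonneg _
  have hd : |‖w‖ - ‖w'‖| ≤ ‖w - w'‖ := abs_norm_sub_norm_le w w'
  have hslip : |‖w‖ ^ (-(1:ℝ)/2) - ‖w'‖ ^ (-(1:ℝ)/2)|
      ≤ (1/2) * τ ^ (-(3:ℝ)/2) * ‖w - w'‖ := by
    have h := rpow_lip hτ (by norm_num : -(1:ℝ)/2 < 0) h1 h3
    have he : (-(-(1:ℝ)/2)) = 1/2 := by norm_num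
    have he2 : (-(1:ℝ)/2 - 1) = -(3:ℝ)/2 := by norm_num
    rw [he, he2] at h
    calc |‖w‖ ^ (-(1:ℝ)/2) - ‖w'‖ ^ (-(1:ℝ)/2)| ≤ 1/2 * τ ^ (-(3:ℝ)/2) * |‖w‖ - ‖w'‖| := h
      _ ≤ (1/2) * τ ^ (-(3:ℝ)/2) * ‖w - w'‖ :=
        mul_le_mul_of_nonneg_left hd (mul_nonneg (by norm_num) hτ3)
  have htlip : |‖w‖ ^ (-(5:ℝ)/2) - ‖w'‖ ^ (-(5:ℝ)/2)|
      ≤ (5/2) * τ ^ (-(7:ℝ)/2) * ‖w - w'‖ := by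
    have h := rpow_lip hτ (by norm_num : -(5:ℝ)/2 < 0) h1 h3
    have he : (-(-(5:ℝ)/2)) = 5/2 := by norm_num
    have he2 : (-(5:ℝ)/2 - 1) = -(7:ℝ)/2 := by norm_num
    rw [he, he2] at h
    calc |‖w‖ ^ (-(5:ℝ)/2) - ‖w'‖ ^ (-(5:ℝ)/2)| ≤ 5/2 * τ ^ (-(7:ℝ)/2) * |‖w‖ - ‖w'‖| := h
      _ ≤ (5/2) * τ ^ (-(7:ℝ)/2) * ‖w - w'‖ :=
        mul_le_mul_of_nonneg_left hd (mul_nonneg (by norm_num) hτ7)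
  have ht'le : ‖w'‖ ^ (-(5:ℝ)/2) ≤ τ ^ (-(5:ℝ)/2) :=
    Real.rpow_le_rpow_of_nonpos hτ h3 (by norm_num)
  have ht'0 : (0:ℝ) ≤ ‖w'‖ ^ (-(5:ℝ)/2) := Real.rpow_nonneg (norm_nonneg _) _
  have key : (dF w - dF w') z
      = (‖w‖ ^ (-(1:ℝ)/2) - ‖w'‖ ^ (-(1:ℝ)/2)) • z
        - ((1/2) * (‖w‖ ^ (-(5:ℝ)/2) - ‖w'‖ ^ (-(5:ℝ)/2)) * ⟪w, z⟫) • w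
        - ((1/2) * ‖w'‖ ^ (-(5:ℝ)/2) * ⟪w - w', z⟫) • w
        - ((1/2) * ‖w'‖ ^ (-(5:ℝ)/2) * ⟪w', z⟫) • (w - w') := by
    rw [ContinuousLinearMap.sub_apply, dF_apply, dF_apply, inner_sub_left]
    module
  have hb0 : ‖(‖w‖ ^ (-(1:ℝ)/2) - ‖w'‖ ^ (-(1:ℝ)/2)) • z‖
      ≤ (1/2) * τ ^ (-(3:ℝ)/2) * ‖w - w'‖ * ‖z‖ := by
    rw [norm_smul, Real.norm_eq_abs]
    exact mul_le_mul_of_nonneg_right hslip hz0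
  have hb1 : ‖((1/2) * (‖w‖ ^ (-(5:ℝ)/2) - ‖w'‖ ^ (-(5:ℝ)/2)) * ⟪w, z⟫) • w‖
      ≤ (5/4) * τ ^ (-(7:ℝ)/2) * R^2 * ‖w - w'‖ * ‖z‖ := by
    rw [norm_smul, Real.norm_eq_abs, abs_mul, abs_mul,
      abs_of_nonneg (by norm_num : (0:ℝ) ≤ 1/2)]
    have hiz : |(⟪w, z⟫ : ℝ)| ≤ R * ‖z‖ :=
      le_trans (abs_real_inner_le_norm w z) (mul_le_mul_of_nonneg_right h2 hz0)
    have s1 : 1/2 * |‖w‖ ^ (-(5:ℝ)/2) - ‖w'‖ ^ (-(5:ℝ)/2)| * |(⟪w, z⟫ : ℝ)|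
        ≤ (1/2 * ((5/2) * τ ^ (-(7:ℝ)/2) * ‖w - w'‖)) * (R * ‖z‖) :=
      mul_le_mul (by linarith) hiz (abs_nonneg _)
        (mul_nonneg (by norm_num) (mul_nonneg (mul_nonneg (by norm_num) hτ7) hdd))
    have s2 : 1/2 * |‖w‖ ^ (-(5:ℝ)/2) - ‖w'‖ ^ (-(5:ℝ)/2)| * |(⟪w, z⟫ : ℝ)| * ‖w‖
        ≤ ((1/2 * ((5/2) * τ ^ (-(7:ℝ)/2) * ‖w - w'‖)) * (R * ‖z‖)) * R :=
      mul_le_mul s1 h2 (norm_nonneg w)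
        (mul_nonneg (mul_nonneg (by norm_num) (mul_nonneg (mul_nonneg (by norm_num) hτ7) hdd))
          (mul_nonneg hR hz0))
    linarith [s2]
  have hb2 : ‖((1/2) * ‖w'‖ ^ (-(5:ℝ)/2) * ⟪w - w', z⟫) • w‖
      ≤ (1/2) * τ ^ (-(5:ℝ)/2) * R * ‖w - w'‖ * ‖z‖ := by
    rw [norm_smul, Real.norm_eq_abs, abs_mul, abs_mul,
      abs_of_nonneg (by norm_num : (0:ℝ) ≤ 1/2), abs_of_nonneg ht'0]
    have hiz : |(⟪w - w', z⟫ : ℝ)| ≤ ‖w - w'‖ * ‖z‖ := abs_real_inner_le_norm _ z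
    have s1 : 1/2 * ‖w'‖ ^ (-(5:ℝ)/2) * |(⟪w - w', z⟫ : ℝ)|
        ≤ (1/2 * τ ^ (-(5:ℝ)/2)) * (‖w - w'‖ * ‖z‖) :=
      mul_le_mul (by linarith) hiz (abs_nonneg _) (mul_nonneg (by norm_num) hτ5)
    have s2 : 1/2 * ‖w'‖ ^ (-(5:ℝ)/2) * |(⟪w - w', z⟫ : ℝ)| * ‖w‖
        ≤ ((1/2 * τ ^ (-(5:ℝ)/2)) * (‖w - w'‖ * ‖z‖)) * R :=
      mul_le_mul s1 h2 (norm_nonneg w)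
        (mul_nonneg (mul_nonneg (by norm_num) hτ5) (mul_nonneg hdd hz0))
    linarith [s2]
  have hb3 : ‖((1/2) * ‖w'‖ ^ (-(5:ℝ)/2) * ⟪w', z⟫) • (w - w')‖
      ≤ (1/2) * τ ^ (-(5:ℝ)/2) * R * ‖w - w'‖ * ‖z‖ := by
    rw [norm_smul, Real.norm_eq_abs, abs_mul, abs_mul,
      abs_of_nonneg (by norm_num : (0:ℝ) ≤ 1/2), abs_of_nonneg ht'0]
    have hiz : |(⟪w', z⟫ : ℝ)| ≤ R * ‖z‖ :=
      le_trans (abs_real_inner_le_norm w' z) (mul_le_mul_of_nonneg_right h4 hz0)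
    have s1 : 1/2 * ‖w'‖ ^ (-(5:ℝ)/2) * |(⟪w', z⟫ : ℝ)|
        ≤ (1/2 * τ ^ (-(5:ℝ)/2)) * (R * ‖z‖) :=
      mul_le_mul (by linarith) hiz (abs_nonneg _) (mul_nonneg (by norm_num) hτ5)
    have s2 : 1/2 * ‖w'‖ ^ (-(5:ℝ)/2) * |(⟪w', z⟫ : ℝ)| * ‖w - w'‖
        ≤ ((1/2 * τ ^ (-(5:ℝ)/2)) * (R * ‖z‖)) * ‖w - w'‖ :=
      mul_le_mul_of_nonneg_right s1 hdd
    linarith [s2]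
  rw [key]
  refine le_trans (norm_sub4 _ _ _ _) ?_
  rw [Kc]
  linarith [hb0, hb1, hb2, hb3]

lemma taylorF {τ R : ℝ} (hτ : 0 < τ) (a h : E)
    (hball : ∀ w ∈ Metric.closedBall a ‖h‖, τ ≤ ‖w‖ ∧ ‖w‖ ≤ R) :
    ‖Fhalf (a + h) - Fhalf a - dF a h‖ ≤ Kc τ R * ‖h‖^2 := by
  have hane : ∀ w ∈ Metric.closedBall a ‖h‖, w ≠ 0 := by
    intro w hw h0
    have := (hball w hw).1
    rw [h0, norm_zero] at this
    linarith
  have hamem : a ∈ Metric.closedBall a ‖h‖ := Metric.mem_closedBall_self (norm_nonneg h)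
  have hR : (0:ℝ) ≤ R := le_trans (le_trans hτ.le (hball a hamem).1) (hball a hamem).2
  have hmvt := Convex.norm_image_sub_le_of_norm_hasFDerivWithin_le
    (f := fun w => Fhalf w - dF a w) (f' := fun w => dF w - dF a)
    (s := Metric.closedBall a ‖h‖)
    (fun w hw => ((hasFDerivAt_Fhalf (hane w hw)).sub ((dF a).hasFDerivAt)).hasFDerivWithinAt)
    (fun w hw => by
      show ‖dF w - dF a‖ ≤ Kc τ R * ‖h‖
      have hlip := dF_lip hτ (hball w hw).1 (hball w hw).2 (hball a hamem).1 (hball a hamem).2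
      have hwa : ‖w - a‖ ≤ ‖h‖ := by
        rw [Metric.mem_closedBall, dist_eq_norm] at hw; exact hw
      have hKc : (0:ℝ) ≤ Kc τ R := Kc_nonneg hτ hR
      calc ‖dF w - dF a‖ ≤ Kc τ R * ‖w - a‖ := hlip
        _ ≤ Kc τ R * ‖h‖ := mul_le_mul_of_nonneg_left hwa hKc)
    (convex_closedBall a ‖h‖)
    hamem
    (by rw [Metric.mem_closedBall, dist_eq_norm, add_sub_cancel_left])
  have key : (Fhalf (a + h) - dF a (a + h)) - (Fhalf a - dF a a)
      = Fhalf (a + h) - Fhalf a - dF a h := by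
    rw [map_add]
    abel
  rw [key, add_sub_cancel_left] at hmvt
  calc ‖Fhalf (a + h) - Fhalf a - dF a h‖ ≤ Kc τ R * ‖h‖ * ‖h‖ := hmvt
    _ = Kc τ R * ‖h‖^2 := by ring

lemma hasFDerivAt_of_bound {F G : Type*} [NormedAddCommGroup F] [NormedSpace ℝ F]
    [NormedAddCommGroup G] [NormedSpace ℝ G]
    {f : F → G} {f' : F →L[ℝ] G} {x : F} (C : ℝ) {e δ : ℝ} (he : 0 < e) (hδ : 0 < δ)
    (hb : ∀ z : F, ‖z‖ ≤ δ → ‖f (x + z) - f x - f' z‖ ≤ C * ‖z‖ ^ ((1:ℝ) + e)) :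
    HasFDerivAt f f' x := by
  rw [hasFDerivAt_iff_isLittleO_nhds_zero, Asymptotics.isLittleO_iff]
  intro c hc
  rw [Metric.eventually_nhds_iff]
  refine ⟨min δ ((c / (|C| + 1)) ^ e⁻¹), lt_min hδ (Real.rpow_pos_of_pos (by positivity) _),
    fun z hz => ?_⟩
  rw [dist_zero_right] at hz
  have hz1 : ‖z‖ ≤ δ := le_of_lt (lt_of_lt_of_le hz (min_le_left _ _))
  have hz2 : ‖z‖ ≤ (c / (|C| + 1)) ^ e⁻¹ := le_of_lt (lt_of_lt_of_le hz (min_le_right _ _))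
  rcases eq_or_ne z 0 with rfl | hz0
  · simp
  · have hzpos : (0:ℝ) < ‖z‖ := norm_pos_iff.mpr hz0
    have h1 : ‖z‖ ^ ((1:ℝ) + e) = ‖z‖ * ‖z‖ ^ e := by
      rw [Real.rpow_add hzpos, Real.rpow_one]
    have h2 : ‖z‖ ^ e ≤ c / (|C| + 1) := by
      calc ‖z‖ ^ e ≤ ((c / (|C| + 1)) ^ e⁻¹) ^ e :=
            Real.rpow_le_rpow hzpos.le hz2 he.le
        _ = c / (|C| + 1) := by
            rw [← Real.rpow_mul (le_of_lt (by positivity)), inv_mul_cancel₀ he.ne',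
              Real.rpow_one]
    have h3 : (0:ℝ) ≤ ‖z‖ ^ e := Real.rpow_nonneg hzpos.le e
    calc ‖f (x + z) - f x - f' z‖ ≤ C * ‖z‖ ^ ((1:ℝ) + e) := hb z hz1
      _ ≤ |C| * (‖z‖ * (c / (|C| + 1))) := by
          rw [h1]
          have hCle : C * (‖z‖ * ‖z‖ ^ e) ≤ |C| * (‖z‖ * ‖z‖ ^ e) :=
            mul_le_mul_of_nonneg_right (le_abs_self C) (mul_nonneg hzpos.le h3)
          have : |C| * (‖z‖ * ‖z‖ ^ e) ≤ |C| * (‖z‖ * (c / (|C| + 1))) :=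
            mul_le_mul_of_nonneg_left
              (mul_le_mul_of_nonneg_left h2 hzpos.le) (abs_nonneg C)
          linarith
      _ ≤ c * ‖z‖ := by
          have hC1 : (0:ℝ) < |C| + 1 := by positivity
          have hfrac : |C| * (|C| + 1)⁻¹ ≤ 1 := by
            rw [← div_eq_mul_inv, div_le_one hC1]; linarith
          calc |C| * (‖z‖ * (c / (|C| + 1)))
              = (|C| * (|C| + 1)⁻¹) * (c * ‖z‖) := by
                rw [div_eq_mul_inv]; ring
            _ ≤ 1 * (c * ‖z‖) :=
                mul_le_mul_of_nonneg_right hfrac (by positivity)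
            _ = c * ‖z‖ := one_mul _

section Functional

variable {M : Type*} [TopologicalSpace M] [CompactSpace M] [MeasurableSpace M] [BorelSpace M]
variable (μ : Measure M) [IsFiniteMeasure μ]

lemma integrable_cont {f : M → ℝ} (hf : Continuous f) : Integrable f μ := by
  refine ⟨hf.aestronglyMeasurable, ?_⟩
  refine HasFiniteIntegral.of_bounded (C := ‖(⟨f, hf⟩ : C(M, ℝ))‖) (ae_of_all μ fun p => ?_)
  exact ContinuousMap.norm_coe_le_norm (⟨f, hf⟩ : C(M, ℝ)) p

noncomputable def pairing (W : C(M, E)) : C(M, E) →L[ℝ] ℝ :=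
  LinearMap.mkContinuous
    { toFun := fun Y => ∫ p, ⟪W p, Y p⟫ ∂μ
      map_add' := fun Y Y' => by
        have h1 : Integrable (fun p => (⟪W p, Y p⟫ : ℝ)) μ :=
          integrable_cont μ (W.continuous.inner Y.continuous)
        have h2 : Integrable (fun p => (⟪W p, Y' p⟫ : ℝ)) μ :=
          integrable_cont μ (W.continuous.inner Y'.continuous)
        rw [← integral_add h1 h2]
        apply integral_congr_ae (ae_of_all μ fun p => ?_)
        simp [inner_add_right]
      map_smul' := fun c Y => by
        simp only [ContinuousMap.smul_apply, real_inner_smul_right, RingHom.id_apply,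
          smul_eq_mul]
        exact integral_const_mul c _ }
    (‖W‖ * (μ Set.univ).toReal)
    (fun Y => by
      have hb : ∀ p, ‖(⟪W p, Y p⟫ : ℝ)‖ ≤ ‖W‖ * ‖Y‖ := fun p => by
        rw [Real.norm_eq_abs]
        calc |(⟪W p, Y p⟫ : ℝ)| ≤ ‖W p‖ * ‖Y p‖ := abs_real_inner_le_norm _ _
          _ ≤ ‖W‖ * ‖Y‖ :=
            mul_le_mul (W.norm_coe_le_norm p) (Y.norm_coe_le_norm p)
              (norm_nonneg _) (norm_nonneg _)
      calc ‖∫ p, (⟪W p, Y p⟫ : ℝ) ∂μ‖ ≤ ‖W‖ * ‖Y‖ * (μ Set.univ).toReal :=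
            norm_integral_le_of_norm_le_const (ae_of_all μ hb)
        _ = ‖W‖ * (μ Set.univ).toReal * ‖Y‖ := by ring)

lemma pairing_apply (W Y : C(M, E)) : pairing μ W Y = ∫ p, ⟪W p, Y p⟫ ∂μ := rfl

noncomputable def FC (X : C(M, E)) : C(M, E) :=
  ⟨fun p => Fhalf (X p), continuous_Fhalf.comp X.continuous⟩

noncomputable def LL (X : C(M, E)) : C(M, E) →L[ℝ] ℝ := (3/2 : ℝ) • pairing μ (FC X)

lemma LL_apply (X Y : C(M, E)) : LL μ X Y = (3/2) * ∫ p, ⟪Fhalf (X p), Y p⟫ ∂μ := rfl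

lemma hasFDerivAt_En (X : C(M, E)) :
    HasFDerivAt (fun X : C(M, E) => ∫ p, ‖X p‖ ^ ((3:ℝ)/2) ∂μ) (LL μ X) X := by
  apply hasFDerivAt_of_bound (e := 1/2) (δ := 1) (6 * (μ Set.univ).toReal)
    (by norm_num) one_pos
  intro Z _
  have hint1 : Integrable (fun p => ‖(X + Z) p‖ ^ ((3:ℝ)/2)) μ :=
    integrable_cont μ ((X + Z).continuous.norm.rpow_const fun p => Or.inr (by norm_num))
  have hint2 : Integrable (fun p => ‖X p‖ ^ ((3:ℝ)/2)) μ :=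
    integrable_cont μ (X.continuous.norm.rpow_const fun p => Or.inr (by norm_num))
  have hint3 : Integrable (fun p => (3/2) * (⟪Fhalf (X p), Z p⟫ : ℝ)) μ :=
    integrable_cont μ (continuous_const.mul ((FC X).continuous.inner Z.continuous))
  have key : (∫ p, ‖(X + Z) p‖ ^ ((3:ℝ)/2) ∂μ) - (∫ p, ‖X p‖ ^ ((3:ℝ)/2) ∂μ) - LL μ X Z
      = ∫ p, (phi (X p + Z p) - phi (X p) - phi' (X p) (Z p)) ∂μ := by
    rw [LL_apply, ← integral_const_mul]
    have e1 : (∫ p, (phi (X p + Z p) - phi (X p) - phi' (X p) (Z p)) ∂μ)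
        = ∫ p, ((‖(X + Z) p‖ ^ ((3:ℝ)/2) - ‖X p‖ ^ ((3:ℝ)/2))
            - (3/2) * (⟪Fhalf (X p), Z p⟫ : ℝ)) ∂μ :=
      integral_congr_ae (ae_of_all μ fun p => by
        simp only [phi, phi'_apply, ContinuousMap.add_apply])
    have e2 : (∫ p, ((‖(X + Z) p‖ ^ ((3:ℝ)/2) - ‖X p‖ ^ ((3:ℝ)/2))
            - (3/2) * (⟪Fhalf (X p), Z p⟫ : ℝ)) ∂μ)
        = (∫ p, (‖(X + Z) p‖ ^ ((3:ℝ)/2) - ‖X p‖ ^ ((3:ℝ)/2)) ∂μ)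
          - ∫ p, (3/2) * (⟪Fhalf (X p), Z p⟫ : ℝ) ∂μ :=
      integral_sub (hint1.sub hint2) hint3
    have e3 : (∫ p, (‖(X + Z) p‖ ^ ((3:ℝ)/2) - ‖X p‖ ^ ((3:ℝ)/2)) ∂μ)
        = (∫ p, ‖(X + Z) p‖ ^ ((3:ℝ)/2) ∂μ) - ∫ p, ‖X p‖ ^ ((3:ℝ)/2) ∂μ :=
      integral_sub hint1 hint2
    rw [e1, e2, e3]
  rw [key]
  have hptw : ∀ p, ‖phi (X p + Z p) - phi (X p) - phi' (X p) (Z p)‖ ≤ 6 * ‖Z‖ ^ ((3:ℝ)/2) :=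
    fun p => by
      rw [Real.norm_eq_abs]
      calc |phi (X p + Z p) - phi (X p) - phi' (X p) (Z p)| ≤ 6 * ‖Z p‖ ^ ((3:ℝ)/2) :=
            abs_phi_taylor (X p) (Z p)
        _ ≤ 6 * ‖Z‖ ^ ((3:ℝ)/2) := by
            have := Real.rpow_le_rpow (norm_nonneg (Z p)) (Z.norm_coe_le_norm p)
              (by norm_num : (0:ℝ) ≤ 3/2)
            linarith
  calc ‖∫ p, (phi (X p + Z p) - phi (X p) - phi' (X p) (Z p)) ∂μ‖
      ≤ 6 * ‖Z‖ ^ ((3:ℝ)/2) * (μ Set.univ).toReal :=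
        norm_integral_le_of_norm_le_const (ae_of_all μ hptw)
    _ = 6 * (μ Set.univ).toReal * ‖Z‖ ^ ((1:ℝ) + 1/2) := by
        norm_num
        ring
  
lemma LL_sub_norm (X X' : C(M, E)) :
    ‖LL μ X - LL μ X'‖ ≤ 6 * (μ Set.univ).toReal * ‖X - X'‖ ^ ((1:ℝ)/2) := by
  have hμ : (0:ℝ) ≤ (μ Set.univ).toReal := ENNReal.toReal_nonneg
  have hrp : (0:ℝ) ≤ ‖X - X'‖ ^ ((1:ℝ)/2) := Real.rpow_nonneg (norm_nonneg _) _
  apply ContinuousLinearMap.opNorm_le_bound _ (by positivity)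
  intro Y
  have h1 : Integrable (fun p => (⟪Fhalf (X p), Y p⟫ : ℝ)) μ :=
    integrable_cont μ ((FC X).continuous.inner Y.continuous)
  have h2 : Integrable (fun p => (⟪Fhalf (X' p), Y p⟫ : ℝ)) μ :=
    integrable_cont μ ((FC X').continuous.inner Y.continuous)
  have key : (LL μ X - LL μ X') Y
      = (3/2) * ∫ p, (⟪Fhalf (X p) - Fhalf (X' p), Y p⟫ : ℝ) ∂μ := by
    rw [ContinuousLinearMap.sub_apply, LL_apply, LL_apply, ← mul_sub, ← integral_sub h1 h2]
    congr 1
    apply integral_congr_ae (ae_of_all μ fun p => ?_)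
    rw [inner_sub_left]
  rw [key]
  have hptw : ∀ p, ‖(⟪Fhalf (X p) - Fhalf (X' p), Y p⟫ : ℝ)‖
      ≤ 4 * ‖X - X'‖ ^ ((1:ℝ)/2) * ‖Y‖ := fun p => by
    rw [Real.norm_eq_abs]
    have h3 : ‖Fhalf (X p) - Fhalf (X' p)‖ ≤ 4 * ‖X p - X' p‖ ^ ((1:ℝ)/2) :=
      norm_Fhalf_sub_le _ _
    have h4 : ‖X p - X' p‖ ^ ((1:ℝ)/2) ≤ ‖X - X'‖ ^ ((1:ℝ)/2) := by
      apply Real.rpow_le_rpow (norm_nonneg _) _ (by norm_num)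
      exact le_trans (le_of_eq (by simp)) ((X - X').norm_coe_le_norm p)
    calc |(⟪Fhalf (X p) - Fhalf (X' p), Y p⟫ : ℝ)|
        ≤ ‖Fhalf (X p) - Fhalf (X' p)‖ * ‖Y p‖ := abs_real_inner_le_norm _ _
      _ ≤ (4 * ‖X - X'‖ ^ ((1:ℝ)/2)) * ‖Y‖ := by
          apply mul_le_mul (by linarith) (Y.norm_coe_le_norm p) (norm_nonneg _)
          positivity
  rw [Real.norm_eq_abs, abs_mul, abs_of_nonneg (by norm_num : (0:ℝ) ≤ 3/2)]
  calc (3/2) * |∫ p, (⟪Fhalf (X p) - Fhalf (X' p), Y p⟫ : ℝ) ∂μ|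
      ≤ (3/2) * (4 * ‖X - X'‖ ^ ((1:ℝ)/2) * ‖Y‖ * (μ Set.univ).toReal) := by
        have := norm_integral_le_of_norm_le_const (μ := μ) (ae_of_all μ hptw)
        rw [Real.norm_eq_abs, measureReal_def] at this
        linarith
    _ ≤ 6 * (μ Set.univ).toReal * ‖X - X'‖ ^ ((1:ℝ)/2) * ‖Y‖ := by nlinarith [norm_nonneg Y]

lemma continuous_of_holder {F G : Type*} [NormedAddCommGroup F] [NormedSpace ℝ F]
    [NormedAddCommGroup G] [NormedSpace ℝ G] {f : F → G} {C a : ℝ} (ha : 0 < a)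
    (hb : ∀ x y : F, ‖f x - f y‖ ≤ C * ‖x - y‖ ^ a) : Continuous f := by
  apply Metric.continuous_iff.mpr
  intro x ε hε
  refine ⟨(ε / (|C| + 1)) ^ a⁻¹, Real.rpow_pos_of_pos (by positivity) _, fun y hy => ?_⟩
  rw [dist_eq_norm] at hy ⊢
  have h0 : (0:ℝ) ≤ ‖y - x‖ ^ a := Real.rpow_nonneg (norm_nonneg _) _
  calc ‖f y - f x‖ ≤ C * ‖y - x‖ ^ a := hb y x
    _ ≤ |C| * ‖y - x‖ ^ a := mul_le_mul_of_nonneg_right (le_abs_self C) h0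
    _ ≤ |C| * ((ε / (|C| + 1)) ^ a⁻¹) ^ a :=
        mul_le_mul_of_nonneg_left
          (Real.rpow_le_rpow (norm_nonneg _) hy.le ha.le) (abs_nonneg C)
    _ = |C| * (ε / (|C| + 1)) := by
        rw [← Real.rpow_mul (le_of_lt (by positivity)), inv_mul_cancel₀ ha.ne',
          Real.rpow_one]
    _ < ε := by
        have hC1 : (0:ℝ) < |C| + 1 := by positivity
        rw [div_eq_mul_inv]
        have e : |C| * (ε * (|C| + 1)⁻¹) = (|C| * (|C| + 1)⁻¹) * ε := by ring
        rw [e]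
        have hfrac : |C| * (|C| + 1)⁻¹ < 1 := by
          rw [← div_eq_mul_inv, div_lt_one hC1]; linarith
        nlinarith

lemma contDiff_En : ContDiff ℝ 1 (fun X : C(M, E) => ∫ p, ‖X p‖ ^ ((3:ℝ)/2) ∂μ) := by
  rw [contDiff_one_iff_fderiv]
  refine ⟨fun X => (hasFDerivAt_En μ X).differentiableAt, ?_⟩
  have : (fderiv ℝ fun X : C(M, E) => ∫ p, ‖X p‖ ^ ((3:ℝ)/2) ∂μ) = LL μ :=
    funext fun X => (hasFDerivAt_En μ X).fderiv
  rw [this]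
  exact continuous_of_holder (C := 6 * (μ Set.univ).toReal) (a := (1:ℝ)/2)
    (by norm_num) (fun X X' => LL_sub_norm μ X X')

lemma inner_dF {v : E} (z y : E) (hv : v ≠ 0) :
    (⟪dF v z, y⟫ : ℝ)
      = ⟪z, y⟫ / Real.sqrt ‖v‖ - (1/2) * (⟪v, z⟫ * ⟪v, y⟫ / ‖v‖ ^ ((5:ℝ)/2)) := by
  rw [dF_apply, inner_sub_left, real_inner_smul_left, real_inner_smul_left]
  have h1 : ‖v‖ ^ (-(1:ℝ)/2) = (Real.sqrt ‖v‖)⁻¹ := by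
    rw [Real.sqrt_eq_rpow, ← Real.rpow_neg (norm_nonneg v)]
    norm_num
  have h2 : ‖v‖ ^ (-(5:ℝ)/2) = (‖v‖ ^ ((5:ℝ)/2))⁻¹ := by
    rw [← Real.rpow_neg (norm_nonneg v)]
    norm_num
  rw [h1, h2]
  rw [div_eq_mul_inv, div_eq_mul_inv]
  ring

lemma continuousOn_of_lip {F G : Type*} [NormedAddCommGroup F] [NormedSpace ℝ F]
    [NormedAddCommGroup G] [NormedSpace ℝ G] {f : F → G} {s : Set F} {C : ℝ}
    (hb : ∀ x ∈ s, ∀ y ∈ s, ‖f x - f y‖ ≤ C * ‖x - y‖) : ContinuousOn f s := by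
  apply Metric.continuousOn_iff.mpr
  intro x hx ε hε
  refine ⟨ε / (|C| + 1), by positivity, fun y hy hxy => ?_⟩
  rw [dist_eq_norm] at hxy ⊢
  have hC1 : (0:ℝ) < |C| + 1 := by positivity
  calc ‖f y - f x‖ ≤ C * ‖y - x‖ := hb y hy x hx
    _ ≤ |C| * ‖y - x‖ := mul_le_mul_of_nonneg_right (le_abs_self C) (norm_nonneg _)
    _ < (|C| + 1) * (ε / (|C| + 1)) := by
        apply mul_lt_mul' (by linarith) hxy (norm_nonneg _) hC1
    _ = ε := by field_simp

noncomputable def dFC (X : C(M, E)) (hX : ∀ p, X p ≠ 0) (Z : C(M, E)) : C(M, E) :=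
  ⟨fun p => dF (X p) (Z p), by
    have h1 : Continuous fun p => ‖X p‖ ^ (-(1:ℝ)/2) :=
      X.continuous.norm.rpow_const fun p => Or.inl (norm_ne_zero_iff.mpr (hX p))
    have h5 : Continuous fun p => ‖X p‖ ^ (-(5:ℝ)/2) :=
      X.continuous.norm.rpow_const fun p => Or.inl (norm_ne_zero_iff.mpr (hX p))
    simp only [dF_apply]
    exact (h1.smul Z.continuous).sub
      (((continuous_const.mul h5).mul (X.continuous.inner Z.continuous)).smul X.continuous)⟩

lemma dFC_apply (X : C(M, E)) (hX : ∀ p, X p ≠ 0) (Z : C(M, E)) (p : M) :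
    dFC X hX Z p = dF (X p) (Z p) := rfl

lemma pairing_add (W W' : C(M, E)) :
    pairing μ (W + W') = pairing μ W + pairing μ W' := by
  ext Y
  have h1 : Integrable (fun p => (⟪W p, Y p⟫ : ℝ)) μ :=
    integrable_cont μ (W.continuous.inner Y.continuous)
  have h2 : Integrable (fun p => (⟪W' p, Y p⟫ : ℝ)) μ :=
    integrable_cont μ (W'.continuous.inner Y.continuous)
  show pairing μ (W + W') Y = pairing μ W Y + pairing μ W' Y
  rw [pairing_apply, pairing_apply, pairing_apply, ← integral_add h1 h2]
  apply integral_congr_ae (ae_of_all μ fun p => ?_)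
  simp [inner_add_left]

lemma pairing_smul (c : ℝ) (W : C(M, E)) :
    pairing μ (c • W) = c • pairing μ W := by
  ext Y
  show pairing μ (c • W) Y = c • pairing μ W Y
  rw [pairing_apply, pairing_apply]
  have : ∀ p, (⟪(c • W) p, Y p⟫ : ℝ) = c * ⟪W p, Y p⟫ := fun p => by
    simp [real_inner_smul_left]
  rw [integral_congr_ae (ae_of_all μ this), integral_const_mul]
  rfl

noncomputable def BB (X : C(M, E)) (hX : ∀ p, X p ≠ 0) (Cb : ℝ) (hCb0 : 0 ≤ Cb)
    (hCb : ∀ p, ‖dF (X p)‖ ≤ Cb) : C(M, E) →L[ℝ] C(M, E) →L[ℝ] ℝ :=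
  LinearMap.mkContinuous
    { toFun := fun Z => (3/2 : ℝ) • pairing μ (dFC X hX Z)
      map_add' := fun Z Z' => by
        have h : dFC X hX (Z + Z') = dFC X hX Z + dFC X hX Z' := by
          ext p
          simp [dFC_apply, ContinuousMap.add_apply, map_add]
        show (3/2 : ℝ) • pairing μ (dFC X hX (Z + Z'))
          = (3/2 : ℝ) • pairing μ (dFC X hX Z) + (3/2 : ℝ) • pairing μ (dFC X hX Z')
        rw [h, pairing_add, smul_add]
      map_smul' := fun c Z => by
        have h : dFC X hX (c • Z) = c • dFC X hX Z := by
          ext p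
          simp [dFC_apply, ContinuousMap.smul_apply, _root_.map_smul]
        show (3/2 : ℝ) • pairing μ (dFC X hX (c • Z))
          = c • ((3/2 : ℝ) • pairing μ (dFC X hX Z))
        rw [h, pairing_smul, smul_comm] }
    ((3/2) * (Cb * (μ Set.univ).toReal))
    (fun Z => by
      have hμ : (0:ℝ) ≤ (μ Set.univ).toReal := ENNReal.toReal_nonneg
      apply ContinuousLinearMap.opNorm_le_bound _ (by positivity)
      intro Y
      show ‖(3/2 : ℝ) * ∫ p, (⟪dF (X p) (Z p), Y p⟫ : ℝ) ∂μ‖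
        ≤ (3/2) * (Cb * (μ Set.univ).toReal) * ‖Z‖ * ‖Y‖
      have hptw : ∀ p, ‖(⟪dF (X p) (Z p), Y p⟫ : ℝ)‖ ≤ Cb * ‖Z‖ * ‖Y‖ := fun p => by
        rw [Real.norm_eq_abs]
        calc |(⟪dF (X p) (Z p), Y p⟫ : ℝ)| ≤ ‖dF (X p) (Z p)‖ * ‖Y p‖ :=
              abs_real_inner_le_norm _ _
          _ ≤ (‖dF (X p)‖ * ‖Z p‖) * ‖Y p‖ :=
              mul_le_mul_of_nonneg_right ((dF (X p)).le_opNorm (Z p)) (norm_nonneg _)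
          _ ≤ (Cb * ‖Z‖) * ‖Y‖ := by
              apply mul_le_mul _ (Y.norm_coe_le_norm p) (norm_nonneg _)
                (mul_nonneg hCb0 (norm_nonneg Z))
              exact mul_le_mul (hCb p) (Z.norm_coe_le_norm p) (norm_nonneg _) hCb0
      rw [Real.norm_eq_abs, abs_mul, abs_of_nonneg (by norm_num : (0:ℝ) ≤ 3/2)]
      have hint := norm_integral_le_of_norm_le_const (μ := μ) (ae_of_all μ hptw)
      rw [Real.norm_eq_abs, measureReal_def] at hint
      calc (3/2 : ℝ) * |∫ p, (⟪dF (X p) (Z p), Y p⟫ : ℝ) ∂μ|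
          ≤ (3/2) * (Cb * ‖Z‖ * ‖Y‖ * (μ Set.univ).toReal) := by linarith
        _ = (3/2) * (Cb * (μ Set.univ).toReal) * ‖Z‖ * ‖Y‖ := by ring)

lemma BB_apply (X : C(M, E)) (hX : ∀ p, X p ≠ 0) (Cb : ℝ) (hCb0 : 0 ≤ Cb)
    (hCb : ∀ p, ‖dF (X p)‖ ≤ Cb) (Z Y : C(M, E)) :
    BB μ X hX Cb hCb0 hCb Z Y = (3/2) * ∫ p, (⟪dF (X p) (Z p), Y p⟫ : ℝ) ∂μ := rfl

lemma hasFDerivAt_LL {X : C(M, E)} (hX : ∀ p, X p ≠ 0) {τ R r' Cb : ℝ} (hτ : 0 < τ)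
    (hτR : τ ≤ R) (hr' : 0 < r') (hCb0 : 0 ≤ Cb) (hCb : ∀ p, ‖dF (X p)‖ ≤ Cb)
    (hreg : ∀ Z : C(M, E), ‖Z‖ ≤ r' → ∀ p : M,
      ∀ w ∈ Metric.closedBall (X p) ‖Z p‖, τ ≤ ‖w‖ ∧ ‖w‖ ≤ R) :
    HasFDerivAt (LL μ : C(M, E) → C(M, E) →L[ℝ] ℝ) (BB μ X hX Cb hCb0 hCb) X := by
  have hR : (0:ℝ) ≤ R := le_trans hτ.le hτR
  have hKc : (0:ℝ) ≤ Kc τ R := Kc_nonneg hτ hR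
  have hμ : (0:ℝ) ≤ (μ Set.univ).toReal := ENNReal.toReal_nonneg
  apply hasFDerivAt_of_bound (f := (LL μ : C(M, E) → C(M, E) →L[ℝ] ℝ)) (e := 1) (δ := r') ((3/2) * Kc τ R * (μ Set.univ).toReal)
    one_pos hr'
  intro Z hZ
  have hXZ : ∀ p, (X + Z) p = X p + Z p := fun p => rfl
  apply ContinuousLinearMap.opNorm_le_bound _ (by positivity)
  intro Y
  have hnz2 : ∀ p : M, X p + Z p ≠ 0 := by
    intro p
    have hmem : X p + Z p ∈ Metric.closedBall (X p) ‖Z p‖ := by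
      rw [Metric.mem_closedBall, dist_eq_norm, add_sub_cancel_left]
    have := (hreg Z hZ p _ hmem).1
    intro h0
    rw [h0, norm_zero] at this
    linarith
  have h1 : Integrable (fun p => (⟪Fhalf (X p + Z p), Y p⟫ : ℝ)) μ :=
    integrable_cont μ (((FC (X + Z)).continuous).inner Y.continuous)
  have h2 : Integrable (fun p => (⟪Fhalf (X p), Y p⟫ : ℝ)) μ :=
    integrable_cont μ ((FC X).continuous.inner Y.continuous)
  have h3 : Integrable (fun p => (⟪dF (X p) (Z p), Y p⟫ : ℝ)) μ :=
    integrable_cont μ ((dFC X hX Z).continuous.inner Y.continuous)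
  have key : (LL μ (X + Z) - LL μ X - BB μ X hX Cb hCb0 hCb Z) Y
      = (3/2) * ∫ p, (⟪Fhalf (X p + Z p) - Fhalf (X p) - dF (X p) (Z p), Y p⟫ : ℝ) ∂μ := by
    rw [ContinuousLinearMap.sub_apply, ContinuousLinearMap.sub_apply, LL_apply, LL_apply,
      BB_apply]
    rw [← mul_sub, ← mul_sub]
    congr 1
    simp only [ContinuousMap.add_apply]
    have e2 : (∫ p, ((⟪Fhalf (X p + Z p), Y p⟫ : ℝ) - ⟪Fhalf (X p), Y p⟫) ∂μ)
        = (∫ p, (⟪Fhalf (X p + Z p), Y p⟫ : ℝ) ∂μ) - ∫ p, (⟪Fhalf (X p), Y p⟫ : ℝ) ∂μ :=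
      integral_sub h1 h2
    have e3 : (∫ p, (((⟪Fhalf (X p + Z p), Y p⟫ : ℝ) - ⟪Fhalf (X p), Y p⟫)
            - ⟪dF (X p) (Z p), Y p⟫) ∂μ)
        = (∫ p, ((⟪Fhalf (X p + Z p), Y p⟫ : ℝ) - ⟪Fhalf (X p), Y p⟫) ∂μ)
          - ∫ p, (⟪dF (X p) (Z p), Y p⟫ : ℝ) ∂μ :=
      integral_sub (h1.sub h2) h3
    rw [← e2, ← e3]
    apply integral_congr_ae (ae_of_all μ fun p => ?_)
    simp [inner_sub_left]
  rw [key]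
  have hptw : ∀ p, ‖(⟪Fhalf (X p + Z p) - Fhalf (X p) - dF (X p) (Z p), Y p⟫ : ℝ)‖
      ≤ Kc τ R * ‖Z‖^2 * ‖Y‖ := fun p => by
    rw [Real.norm_eq_abs]
    have htay : ‖Fhalf (X p + Z p) - Fhalf (X p) - dF (X p) (Z p)‖ ≤ Kc τ R * ‖Z p‖^2 :=
      taylorF hτ (X p) (Z p) (hreg Z hZ p)
    have hZp : ‖Z p‖^2 ≤ ‖Z‖^2 :=
      pow_le_pow_left₀ (norm_nonneg _) (Z.norm_coe_le_norm p) 2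
    calc |(⟪Fhalf (X p + Z p) - Fhalf (X p) - dF (X p) (Z p), Y p⟫ : ℝ)|
        ≤ ‖Fhalf (X p + Z p) - Fhalf (X p) - dF (X p) (Z p)‖ * ‖Y p‖ :=
          abs_real_inner_le_norm _ _
      _ ≤ (Kc τ R * ‖Z‖^2) * ‖Y‖ := by
          apply mul_le_mul _ (Y.norm_coe_le_norm p) (norm_nonneg _)
            (by positivity)
          calc ‖Fhalf (X p + Z p) - Fhalf (X p) - dF (X p) (Z p)‖
              ≤ Kc τ R * ‖Z p‖^2 := htay
            _ ≤ Kc τ R * ‖Z‖^2 := mul_le_mul_of_nonneg_left hZp hKc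
  have hint := norm_integral_le_of_norm_le_const (μ := μ) (ae_of_all μ hptw)
  rw [Real.norm_eq_abs, abs_mul, abs_of_nonneg (by norm_num : (0:ℝ) ≤ 3/2)]
  rw [Real.norm_eq_abs, measureReal_def] at hint
  have he : ‖Z‖ ^ ((1:ℝ) + 1) = ‖Z‖^2 := by
    rw [show ((1:ℝ) + 1) = ((2:ℕ):ℝ) by norm_num, Real.rpow_natCast]
  rw [he]
  calc (3/2 : ℝ) * |∫ p, (⟪Fhalf (X p + Z p) - Fhalf (X p) - dF (X p) (Z p), Y p⟫ : ℝ) ∂μ|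
      ≤ (3/2) * (Kc τ R * ‖Z‖^2 * ‖Y‖ * (μ Set.univ).toReal) := by linarith
    _ = (3/2) * Kc τ R * (μ Set.univ).toReal * ‖Z‖^2 * ‖Y‖ := by ring

lemma BB_diff_apply_bound {X X' : C(M, E)} (hX : ∀ p, X p ≠ 0) (hX' : ∀ p, X' p ≠ 0)
    {τ R Cb : ℝ} (hτ : 0 < τ) (hτR : τ ≤ R) (hCb0 : 0 ≤ Cb)
    (hCb : ∀ p, ‖dF (X p)‖ ≤ Cb) (hCb' : ∀ p, ‖dF (X' p)‖ ≤ Cb)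
    (hbd : ∀ p, τ ≤ ‖X p‖ ∧ ‖X p‖ ≤ R) (hbd' : ∀ p, τ ≤ ‖X' p‖ ∧ ‖X' p‖ ≤ R)
    (Z Y : C(M, E)) :
    ‖BB μ X hX Cb hCb0 hCb Z Y - BB μ X' hX' Cb hCb0 hCb' Z Y‖
      ≤ (3/2) * Kc τ R * (μ Set.univ).toReal * ‖X - X'‖ * ‖Z‖ * ‖Y‖ := by
  have hR : (0:ℝ) ≤ R := le_trans hτ.le hτR
  have hKc : (0:ℝ) ≤ Kc τ R := Kc_nonneg hτ hR
  have hμ : (0:ℝ) ≤ (μ Set.univ).toReal := ENNReal.toReal_nonneg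
  have h3 : Integrable (fun p => (⟪dF (X p) (Z p), Y p⟫ : ℝ)) μ :=
    integrable_cont μ ((dFC X hX Z).continuous.inner Y.continuous)
  have h4 : Integrable (fun p => (⟪dF (X' p) (Z p), Y p⟫ : ℝ)) μ :=
    integrable_cont μ ((dFC X' hX' Z).continuous.inner Y.continuous)
  have key : BB μ X hX Cb hCb0 hCb Z Y - BB μ X' hX' Cb hCb0 hCb' Z Y
      = (3/2) * ∫ p, (⟪dF (X p) (Z p) - dF (X' p) (Z p), Y p⟫ : ℝ) ∂μ := by
    rw [BB_apply, BB_apply, ← mul_sub]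
    congr 1
    rw [← integral_sub h3 h4]
    apply integral_congr_ae (ae_of_all μ fun p => ?_)
    rw [inner_sub_left]
  rw [key]
  have hptw : ∀ p, ‖(⟪dF (X p) (Z p) - dF (X' p) (Z p), Y p⟫ : ℝ)‖
      ≤ Kc τ R * ‖X - X'‖ * ‖Z‖ * ‖Y‖ := fun p => by
    rw [Real.norm_eq_abs]
    have hlip : ‖dF (X p) - dF (X' p)‖ ≤ Kc τ R * ‖X p - X' p‖ :=
      dF_lip hτ (hbd p).1 (hbd p).2 (hbd' p).1 (hbd' p).2
    have hXX' : ‖X p - X' p‖ ≤ ‖X - X'‖ :=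
      le_trans (le_of_eq (by simp)) ((X - X').norm_coe_le_norm p)
    calc |(⟪dF (X p) (Z p) - dF (X' p) (Z p), Y p⟫ : ℝ)|
        ≤ ‖dF (X p) (Z p) - dF (X' p) (Z p)‖ * ‖Y p‖ := abs_real_inner_le_norm _ _
      _ = ‖(dF (X p) - dF (X' p)) (Z p)‖ * ‖Y p‖ := by
          rw [ContinuousLinearMap.sub_apply]
      _ ≤ (‖dF (X p) - dF (X' p)‖ * ‖Z p‖) * ‖Y p‖ :=
          mul_le_mul_of_nonneg_right ((dF (X p) - dF (X' p)).le_opNorm (Z p)) (norm_nonneg _)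
      _ ≤ ((Kc τ R * ‖X - X'‖) * ‖Z‖) * ‖Y‖ := by
          apply mul_le_mul _ (Y.norm_coe_le_norm p) (norm_nonneg _) (by positivity)
          apply mul_le_mul _ (Z.norm_coe_le_norm p) (norm_nonneg _) (by positivity)
          exact le_trans hlip (mul_le_mul_of_nonneg_left hXX' hKc)
      _ = Kc τ R * ‖X - X'‖ * ‖Z‖ * ‖Y‖ := by ring
  have hint := norm_integral_le_of_norm_le_const (μ := μ) (ae_of_all μ hptw)
  rw [Real.norm_eq_abs, abs_mul, abs_of_nonneg (by norm_num : (0:ℝ) ≤ 3/2)]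
  rw [Real.norm_eq_abs, measureReal_def] at hint
  calc (3/2 : ℝ) * |∫ p, (⟪dF (X p) (Z p) - dF (X' p) (Z p), Y p⟫ : ℝ) ∂μ|
      ≤ (3/2) * (Kc τ R * ‖X - X'‖ * ‖Z‖ * ‖Y‖ * (μ Set.univ).toReal) := by linarith
    _ = (3/2) * Kc τ R * (μ Set.univ).toReal * ‖X - X'‖ * ‖Z‖ * ‖Y‖ := by ring

end Functional

end EnergyAux


open EnergyAux

/-- On a closed Riemannian 3-manifold `(M,g)` (abstracted as a compact space `M` with a
finite volume measure `μ`, the continuous vector fields being the continuous maps into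
the fiber inner-product space `E` with the `C⁰` sup-norm), the energy functional
`𝓔(X) = ∫_M |X|^{3/2} dV` is continuously Fréchet differentiable with
`D𝓔(X)(Y) = (3/2)∫_M F(X)·Y dV`, where `F(v) = v/√|v|` for `v ≠ 0` and `F(0) = 0`;
moreover, near a nowhere-vanishing `X₀` it is twice continuously Fréchet differentiable
with `D²𝓔(X)(Z,Y) = (3/2)∫ (Z·Y)/√|X| − (3/4)∫ (X·Z)(X·Y)/|X|^{5/2}`. -/
theorem energy_frechet_differentiable
    (M : Type*) [TopologicalSpace M] [CompactSpace M] [MeasurableSpace M]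
    [BorelSpace M] (μ : Measure M) [IsFiniteMeasure μ]
    (E : Type*) [NormedAddCommGroup E] [InnerProductSpace ℝ E]
    (𝓔 : C(M, E) → ℝ)
    (h𝓔 : ∀ X : C(M, E), 𝓔 X = ∫ p, ‖X p‖ ^ ((3 : ℝ) / 2) ∂μ) :
    ContDiff ℝ 1 𝓔 ∧
    (∀ X Y : C(M, E), fderiv ℝ 𝓔 X Y = (3 / 2) * ∫ p, ⟪Fhalf (X p), Y p⟫ ∂μ) ∧
    (∀ X₀ : C(M, E), (∀ p : M, X₀ p ≠ 0) →
      ∃ r > (0 : ℝ), ContDiffOn ℝ 2 𝓔 (Metric.ball X₀ r) ∧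
        ∀ X ∈ Metric.ball X₀ r, ∀ Z Y : C(M, E),
          fderiv ℝ (fun W : C(M, E) => fderiv ℝ 𝓔 W Y) X Z
            = (3 / 2) * (∫ p, ⟪Z p, Y p⟫ / Real.sqrt ‖X p‖ ∂μ)
              - (3 / 4) * (∫ p, ⟪X p, Z p⟫ * ⟪X p, Y p⟫ / ‖X p‖ ^ ((5 : ℝ) / 2) ∂μ)) := by
  have hEfun : 𝓔 = fun X : C(M, E) => ∫ p, ‖X p‖ ^ ((3 : ℝ) / 2) ∂μ := funext h𝓔
  subst hEfun
  have hfderiv : fderiv ℝ (fun X : C(M, E) => ∫ p, ‖X p‖ ^ ((3 : ℝ) / 2) ∂μ) = LL μ :=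
    funext fun X => (hasFDerivAt_En μ X).fderiv
  refine ⟨contDiff_En μ, ?_, ?_⟩
  · intro X Y
    rw [hfderiv]
    exact LL_apply μ X Y
  · intro X₀ hX₀
    rcases isEmpty_or_nonempty M with hM | hM
    · -- M is empty : everything is trivial
      have hμ0 : μ = 0 := Subsingleton.elim μ 0
      have hE0 : (fun X : C(M, E) => ∫ p, ‖X p‖ ^ ((3 : ℝ) / 2) ∂μ) = fun _ => (0:ℝ) := by
        funext X
        rw [hμ0, integral_zero_measure]
      refine ⟨1, one_pos, ?_, ?_⟩
      · rw [hE0]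
        exact contDiffOn_const
      · intro X _ Z Y
        have h1 : (fun W : C(M, E) =>
            fderiv ℝ (fun X : C(M, E) => ∫ p, ‖X p‖ ^ ((3 : ℝ) / 2) ∂μ) W Y)
            = fun _ => (0:ℝ) := by
          funext W
          rw [hE0, fderiv_fun_const]
          simp
        rw [h1, fderiv_fun_const]
        simp [hμ0, integral_zero_measure]
    · -- M nonempty
      obtain ⟨p₀, -, hp₀'⟩ := isCompact_univ.exists_isMinOn Set.univ_nonempty
        (X₀.continuous.norm.continuousOn)
      have hp₀ : ∀ p : M, p ∈ Set.univ → ‖X₀ p₀‖ ≤ ‖X₀ p‖ := fun p hp => hp₀' hp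
      set c := ‖X₀ p₀‖ with hcdef
      have hc : 0 < c := norm_pos_iff.mpr (hX₀ p₀)
      have hcle : ∀ p, c ≤ ‖X₀ p‖ := fun p => hp₀ p (Set.mem_univ p)
      have hX₀n : (0:ℝ) ≤ ‖X₀‖ := norm_nonneg _
      have hτ : (0:ℝ) < c/2 := by linarith
      have hτR : c/2 ≤ ‖X₀‖ + c := by linarith
      set Cb := (3/2) * (c/2) ^ (-(1:ℝ)/2) with hCbdef
      have hCb0 : (0:ℝ) ≤ Cb := mul_nonneg (by norm_num) (Real.rpow_nonneg hτ.le _)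
      -- facts for members of the ball
      have hfacts : ∀ X : C(M, E), X ∈ Metric.ball X₀ (c/4) →
          (∀ p, X p ≠ 0) ∧ (∀ p, ‖dF (X p)‖ ≤ Cb) ∧
          (∀ p, c/2 ≤ ‖X p‖ ∧ ‖X p‖ ≤ ‖X₀‖ + c) := by
        intro X hX
        have hXd : ‖X - X₀‖ < c/4 := by rwa [Metric.mem_ball, dist_eq_norm] at hX
        have hdist : ∀ p, ‖X p - X₀ p‖ ≤ ‖X - X₀‖ := fun p =>
          le_trans (le_of_eq (by simp)) ((X - X₀).norm_coe_le_norm p)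
        have low : ∀ p, c/2 ≤ ‖X p‖ := fun p => by
          have h1 := hcle p
          have h2 := hdist p
          have h3 := abs_norm_sub_norm_le (X p) (X₀ p)
          have h4 := le_abs_self (‖X₀ p‖ - ‖X p‖)
          rw [abs_sub_comm] at h3
          linarith
        have high : ∀ p, ‖X p‖ ≤ ‖X₀‖ + c := fun p => by
          have h1 := hdist p
          have h2 := X₀.norm_coe_le_norm p
          have h3 := norm_sub_norm_le (X p) (X₀ p)
          linarith
        have hnz : ∀ p, X p ≠ 0 := fun p h0 => by
          have := low p
          rw [h0, norm_zero] at this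
          linarith
        refine ⟨hnz, fun p => ?_, fun p => ⟨low p, high p⟩⟩
        calc ‖dF (X p)‖ ≤ (3/2) * ‖X p‖ ^ (-(1:ℝ)/2) := dF_opnorm (hnz p)
          _ ≤ Cb := by
              rw [hCbdef]
              apply mul_le_mul_of_nonneg_left _ (by norm_num)
              exact Real.rpow_le_rpow_of_nonpos hτ (low p) (by norm_num)
      have hreg : ∀ X ∈ Metric.ball X₀ (c/4), ∀ Z : C(M, E), ‖Z‖ ≤ c/4 → ∀ p : M,
          ∀ w ∈ Metric.closedBall (X p) ‖Z p‖, c/2 ≤ ‖w‖ ∧ ‖w‖ ≤ ‖X₀‖ + c := by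
        intro X hX Z hZ p w hw
        have hXd : ‖X - X₀‖ < c/4 := by rwa [Metric.mem_ball, dist_eq_norm] at hX
        have hdist : ‖X p - X₀ p‖ ≤ ‖X - X₀‖ :=
          le_trans (le_of_eq (by simp)) ((X - X₀).norm_coe_le_norm p)
        have hZp : ‖Z p‖ ≤ c/4 := le_trans (Z.norm_coe_le_norm p) hZ
        have hwX : ‖w - X p‖ ≤ ‖Z p‖ := by
          rwa [Metric.mem_closedBall, dist_eq_norm] at hw
        have hwX₀ : ‖w - X₀ p‖ ≤ c/2 := by
          calc ‖w - X₀ p‖ ≤ ‖w - X p‖ + ‖X p - X₀ p‖ := by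
                have := norm_add_le (w - X p) (X p - X₀ p)
                simpa using this
            _ ≤ c/2 := by linarith
        have h1 := hcle p
        have h2 := X₀.norm_coe_le_norm p
        have h3 := abs_norm_sub_norm_le w (X₀ p)
        have h4 := le_abs_self (‖X₀ p‖ - ‖w‖)
        have h5 := le_abs_self (‖w‖ - ‖X₀ p‖)
        rw [abs_sub_comm] at h3
        constructor
        · have := abs_norm_sub_norm_le w (X₀ p)
          linarith [le_abs_self (‖X₀ p‖ - ‖w‖), neg_abs_le (‖X₀ p‖ - ‖w‖)]
        · have := abs_norm_sub_norm_le w (X₀ p)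
          linarith [le_abs_self (‖w‖ - ‖X₀ p‖), neg_abs_le (‖w‖ - ‖X₀ p‖)]
      have hD : ∀ X (hX : X ∈ Metric.ball X₀ (c/4)),
          HasFDerivAt (LL μ : C(M, E) → C(M, E) →L[ℝ] ℝ)
            (BB μ X (hfacts X hX).1 Cb hCb0 (hfacts X hX).2.1) X := fun X hX =>
        hasFDerivAt_LL μ (hfacts X hX).1 hτ hτR (by linarith : (0:ℝ) < c/4) hCb0
          (hfacts X hX).2.1 (hreg X hX)
      set Φ : C(M, E) → (C(M, E) →L[ℝ] C(M, E) →L[ℝ] ℝ) := fun X' =>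
        if h : (∀ p, X' p ≠ 0) ∧ (∀ p, ‖dF (X' p)‖ ≤ Cb) then BB μ X' h.1 Cb hCb0 h.2
        else 0 with hΦdef
      have hΦ : ∀ X (hX : X ∈ Metric.ball X₀ (c/4)),
          Φ X = BB μ X (hfacts X hX).1 Cb hCb0 (hfacts X hX).2.1 := fun X hX => by
        rw [hΦdef]
        exact dif_pos ⟨(hfacts X hX).1, (hfacts X hX).2.1⟩
      have hD' : ∀ X (hX : X ∈ Metric.ball X₀ (c/4)),
          HasFDerivAt (LL μ : C(M, E) → C(M, E) →L[ℝ] ℝ) (Φ X) X := fun X hX => by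
        rw [hΦ X hX]
        exact hD X hX
      refine ⟨c/4, by linarith, ?_, ?_⟩
      · -- ContDiffOn ℝ 2
        rw [show (2 : WithTop ℕ∞) = 1 + 1 by norm_num]
        rw [contDiffOn_succ_iff_fderiv_of_isOpen Metric.isOpen_ball]
        refine ⟨fun X _ => (hasFDerivAt_En μ X).differentiableAt.differentiableWithinAt,
          ?_, ?_⟩
        · intro h
          simp at h
        · rw [hfderiv]
          rw [show (1 : WithTop ℕ∞) = 0 + 1 by norm_num]
          rw [contDiffOn_succ_iff_fderiv_of_isOpen Metric.isOpen_ball]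
          refine ⟨fun X hX => (hD' X hX).differentiableAt.differentiableWithinAt, ?_, ?_⟩
          · intro h
            simp at h
          · rw [contDiffOn_zero]
            have heq : Set.EqOn (fderiv ℝ (LL μ : C(M, E) → C(M, E) →L[ℝ] ℝ)) Φ
                (Metric.ball X₀ (c/4)) := fun X hX => (hD' X hX).fderiv
            refine ContinuousOn.congr ?_ heq
            apply continuousOn_of_lip
              (C := (3/2) * Kc (c/2) (‖X₀‖ + c) * (μ Set.univ).toReal)
            intro X hx X' hx'
            rw [hΦ X hx, hΦ X' hx']
            have hKc : (0:ℝ) ≤ Kc (c/2) (‖X₀‖ + c) := Kc_nonneg hτ (by linarith)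
            have hμT : (0:ℝ) ≤ (μ Set.univ).toReal := ENNReal.toReal_nonneg
            apply ContinuousLinearMap.opNorm_le_bound _ (by positivity)
            intro Z
            apply ContinuousLinearMap.opNorm_le_bound _ (by positivity)
            intro Y
            rw [ContinuousLinearMap.sub_apply, ContinuousLinearMap.sub_apply]
            refine le_trans (BB_diff_apply_bound μ (hfacts X hx).1 (hfacts X' hx').1 hτ hτR
              hCb0 (hfacts X hx).2.1 (hfacts X' hx').2.1 (hfacts X hx).2.2
              (hfacts X' hx').2.2 Z Y) ?_
            apply le_of_eq
            ring
      · -- second derivative formula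
        intro X hX Z Y
        obtain ⟨hx1, hx2, hx3⟩ := hfacts X hX
        have hfd : (fun W : C(M, E) =>
            fderiv ℝ (fun X : C(M, E) => ∫ p, ‖X p‖ ^ ((3 : ℝ) / 2) ∂μ) W Y)
            = fun W : C(M, E) => LL μ W Y := by
          funext W
          rw [hfderiv]
        rw [hfd]
        have hBX : HasFDerivAt (LL μ : C(M, E) → C(M, E) →L[ℝ] ℝ)
            (BB μ X hx1 Cb hCb0 hx2) X := by
          have := hD X hX
          convert this using 2
        have happly := hBX.clm_apply (hasFDerivAt_const Y X)
        rw [happly.fderiv]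
        have heval : ((LL μ X).comp (0 : C(M, E) →L[ℝ] C(M, E))
              + (BB μ X hx1 Cb hCb0 hx2).flip Y) Z
            = BB μ X hx1 Cb hCb0 hx2 Z Y := by
          simp
        rw [heval, BB_apply]
        have hpt : ∀ p, (⟪dF (X p) (Z p), Y p⟫ : ℝ)
            = ⟪Z p, Y p⟫ / Real.sqrt ‖X p‖
              - (1/2) * (⟪X p, Z p⟫ * ⟪X p, Y p⟫ / ‖X p‖ ^ ((5:ℝ)/2)) :=
          fun p => inner_dF (Z p) (Y p) (hx1 p)
        have ia : Integrable (fun p => (⟪Z p, Y p⟫ : ℝ) / Real.sqrt ‖X p‖) μ :=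
          integrable_cont μ ((Z.continuous.inner Y.continuous).div
            (Real.continuous_sqrt.comp X.continuous.norm)
            (fun p => ne_of_gt (Real.sqrt_pos.mpr (norm_pos_iff.mpr (hx1 p)))))
        have ib : Integrable
            (fun p => (⟪X p, Z p⟫ : ℝ) * ⟪X p, Y p⟫ / ‖X p‖ ^ ((5:ℝ)/2)) μ :=
          integrable_cont μ (((X.continuous.inner Z.continuous).mul
              (X.continuous.inner Y.continuous)).div
            (X.continuous.norm.rpow_const fun p => Or.inl (norm_ne_zero_iff.mpr (hx1 p)))
            (fun p => ne_of_gt (Real.rpow_pos_of_pos (norm_pos_iff.mpr (hx1 p)) _)))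
        rw [integral_congr_ae (ae_of_all μ hpt)]
        rw [integral_sub ia (ib.const_mul (1/2))]
        rw [integral_const_mul]
        ring
end
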